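/- arXiv:2604.19364 — 7 statements merged into one kernel-verified Lean document; each statement's English description precedes it below -/
import Mathlib

section
/- Let X and Y be nonempty sets. Let S be a set of maps X → X that is closed under composition and contains all constant maps X → X, and let T be a set of maps Y → Y that is closed under composition and contains all constant maps Y → Y. Let Φ : S → T be a bijection satisfying Φ(f ∘ g) = Φ(f) ∘ Φ(g) for all f, g ∈ S. Then there exists a bijection φ : X → Y such that Φ(f) = φ ∘ f ∘ φ⁻¹ for all f ∈ S. -/
/-!
A constant map `c` is a left zero for composition: `c ∘ g = c`. Since `Φ` is onto `T`, which
contains every constant, multiplicativity forces `Φ` to send constants to constants, and this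
defines `φ` by `Φ (const x) = const (φ x)`. Applying `Φ` to `f ∘ const x = const (f x)` gives
`Φ f (φ x) = φ (f x)`, i.e. `Φ f` is `f` transported along `φ`.
-/

open Function

theorem Function.Semiconj.eq_comp_comp_invFun {X Y : Type*} [Nonempty X] {φ : X → Y}
    {f : X → X} {F : Y → Y} (h : Semiconj φ f F) (hφ : Surjective φ) :
    F = φ ∘ f ∘ invFun φ := by
  funext y
  conv_lhs => rw [← rightInverse_invFun hφ y]
  exact (h (invFun φ y)).symm

section PointMap

variable {X Y : Type*} {S : Set (X → X)} {T : Set (Y → Y)} {Φ : (X → X) → (Y → Y)}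

/-- Evaluating at an arbitrary point loses nothing: `Φ (const X x)` is itself constant
(`map_const_eq_const_pointMap`). -/
noncomputable def pointMap [Nonempty Y] (Φ : (X → X) → (Y → Y)) (x : X) : Y :=
  Φ (const X x) (Classical.arbitrary Y)

variable [Nonempty Y]

theorem map_const_eq_const_pointMap
    (hSconst : ∀ x : X, const X x ∈ S) (hTconst : ∀ y : Y, const Y y ∈ T)
    (hΦsurj : Set.SurjOn Φ S T) (hΦmul : ∀ f ∈ S, ∀ g ∈ S, Φ (f ∘ g) = Φ f ∘ Φ g) (x : X) :
    Φ (const X x) = const Y (pointMap Φ x) := by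
  funext y
  obtain ⟨g, hg, hΦg⟩ := hΦsurj (hTconst y)
  have hcomp : Φ (const X x) = Φ (const X x) ∘ const Y y := by
    rw [← hΦg, ← hΦmul _ (hSconst x) _ hg, const_comp]
  exact (congrFun hcomp y).trans (congrFun hcomp (Classical.arbitrary Y)).symm

theorem pointMap_injective [Nonempty X] (hSconst : ∀ x : X, const X x ∈ S)
    (hTconst : ∀ y : Y, const Y y ∈ T) (hΦ : Set.BijOn Φ S T)
    (hΦmul : ∀ f ∈ S, ∀ g ∈ S, Φ (f ∘ g) = Φ f ∘ Φ g) :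
    Injective (pointMap Φ) := by
  intro x x' h
  have hmap : Φ (const X x) = Φ (const X x') := by
    rw [map_const_eq_const_pointMap hSconst hTconst hΦ.surjOn hΦmul,
      map_const_eq_const_pointMap hSconst hTconst hΦ.surjOn hΦmul, h]
  exact const_injective (hΦ.injOn (hSconst x) (hSconst x') hmap)

theorem pointMap_surjective [Nonempty X] (hSconst : ∀ x : X, const X x ∈ S)
    (hTconst : ∀ y : Y, const Y y ∈ T) (hΦsurj : Set.SurjOn Φ S T)
    (hΦmul : ∀ f ∈ S, ∀ g ∈ S, Φ (f ∘ g) = Φ f ∘ Φ g) :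
    Surjective (pointMap Φ) := by
  intro y
  obtain ⟨g, hg, hΦg⟩ := hΦsurj (hTconst y)
  obtain ⟨x₀⟩ := ‹Nonempty X›
  refine ⟨g x₀, const_injective (α := Y) ?_⟩
  calc const Y (pointMap Φ (g x₀))
      = Φ (g ∘ const X x₀) := (map_const_eq_const_pointMap hSconst hTconst hΦsurj hΦmul _).symm
    _ = const Y y := by rw [hΦmul _ hg _ (hSconst x₀), hΦg, const_comp]

theorem semiconj_pointMap (hSconst : ∀ x : X, const X x ∈ S)
    (hTconst : ∀ y : Y, const Y y ∈ T) (hΦsurj : Set.SurjOn Φ S T)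
    (hΦmul : ∀ f ∈ S, ∀ g ∈ S, Φ (f ∘ g) = Φ f ∘ Φ g) {f : X → X} (hf : f ∈ S) :
    Semiconj (pointMap Φ) f (Φ f) := by
  intro x
  have hmap := hΦmul f hf _ (hSconst x)
  rw [comp_const, map_const_eq_const_pointMap hSconst hTconst hΦsurj hΦmul,
    map_const_eq_const_pointMap hSconst hTconst hΦsurj hΦmul, comp_const] at hmap
  exact const_injective hmap

end PointMap

theorem stmt0_general {X Y : Type*} [Nonempty X] [Nonempty Y]
    (S : Set (X → X)) (T : Set (Y → Y))
    (hSconst : ∀ x : X, (fun _ : X => x) ∈ S)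
    (hTconst : ∀ y : Y, (fun _ : Y => y) ∈ T)
    (Φ : (X → X) → (Y → Y))
    (hΦbij : Set.BijOn Φ S T)
    (hΦmul : ∀ f ∈ S, ∀ g ∈ S, Φ (f ∘ g) = Φ f ∘ Φ g) :
    ∃ φ : X → Y, Function.Bijective φ ∧
      ∀ f ∈ S, Φ f = φ ∘ f ∘ Function.invFun φ := by
  have hsurj := pointMap_surjective hSconst hTconst hΦbij.surjOn hΦmul
  refine ⟨pointMap Φ, ⟨pointMap_injective hSconst hTconst hΦbij hΦmul, hsurj⟩, fun f hf => ?_⟩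
  exact (semiconj_pointMap hSconst hTconst hΦbij.surjOn hΦmul hf).eq_comp_comp_invFun hsurj

/-- Schreier's lemma. -/
theorem stmt0 {X Y : Type*} [Nonempty X] [Nonempty Y]
    (S : Set (X → X)) (T : Set (Y → Y))
    (hScomp : ∀ f ∈ S, ∀ g ∈ S, f ∘ g ∈ S)
    (hSconst : ∀ x : X, (fun _ : X => x) ∈ S)
    (hTcomp : ∀ f ∈ T, ∀ g ∈ T, f ∘ g ∈ T)
    (hTconst : ∀ y : Y, (fun _ : Y => y) ∈ T)
    (Φ : (X → X) → (Y → Y))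
    (hΦbij : Set.BijOn Φ S T)
    (hΦmul : ∀ f ∈ S, ∀ g ∈ S, Φ (f ∘ g) = Φ f ∘ Φ g) :
    ∃ φ : X → Y, Function.Bijective φ ∧
      ∀ f ∈ S, Φ f = φ ∘ f ∘ Function.invFun φ :=
  stmt0_general S T hSconst hTconst Φ hΦbij hΦmul
end

section
/- Let φ : ℂ* → ℂ* be a conjugating mapping (a bijection such that for every holomorphic f : ℂ* → ℂ* the map φ ∘ f ∘ φ⁻¹ is holomorphic) with φ(1) = 1. Then φ is multiplicative, i.e. φ(a·b) = φ(a)·φ(b) for all a, b ∈ ℂ*, so φ is a group automorphism of the multiplicative group ℂ*; moreover φ(−1) = −1 and φ(i) = i or φ(i) = −i. -/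
open Complex Set

noncomputable section

noncomputable section

/-- The punctured complex line `ℂ* = ℂ ∖ {0}`. -/
def Cstar : Set ℂ := {z : ℂ | z ≠ 0}

/-- A holomorphic self-map of `ℂ*` (represented by a total function whose behaviour
matters only on `ℂ*`). -/
def CstarEndo (f : ℂ → ℂ) : Prop :=
  DifferentiableOn ℂ f Cstar ∧ Set.MapsTo f Cstar Cstar

/-- A conjugating mapping of `ℂ*`: a bijection of `ℂ*` such that for every holomorphic
self-map `f` of `ℂ*` the conjugate `φ ∘ f ∘ φ⁻¹` is again a holomorphic self-map of `ℂ*`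
(expressed as: there is a holomorphic self-map `g` with `g ∘ φ = φ ∘ f` on `ℂ*`). -/
def ConjugatingCstar (φ : ℂ → ℂ) : Prop :=
  Set.BijOn φ Cstar Cstar ∧
    ∀ f, CstarEndo f → ∃ g, CstarEndo g ∧ ∀ z ∈ Cstar, g (φ z) = φ (f z)

open Filter Function Metric Topology Bornology

lemma mem_Cstar_iff {z : ℂ} : z ∈ Cstar ↔ z ≠ 0 := Iff.rfl

/-- A pair of mutually inverse holomorphic self-maps of `ℂ*`. -/
structure HoloPair (g g' : ℂ → ℂ) : Prop where
  diff : DifferentiableOn ℂ g Cstar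
  diff' : DifferentiableOn ℂ g' Cstar
  maps : ∀ z : ℂ, z ≠ 0 → g z ≠ 0
  maps' : ∀ z : ℂ, z ≠ 0 → g' z ≠ 0
  inv : ∀ z : ℂ, z ≠ 0 → g' (g z) = z
  inv' : ∀ z : ℂ, z ≠ 0 → g (g' z) = z

namespace HoloPair

variable {g g' : ℂ → ℂ}

lemma symm (hp : HoloPair g g') : HoloPair g' g :=
  ⟨hp.diff', hp.diff, hp.maps', hp.maps, hp.inv', hp.inv⟩

lemma diffAt (hp : HoloPair g g') {z : ℂ} (hz : z ≠ 0) : DifferentiableAt ℂ g z :=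
  hp.diff.differentiableAt (isOpen_ne.mem_nhds hz)

lemma hat (hp : HoloPair g g') :
    HoloPair (fun z => g z⁻¹) (fun w => (g' w)⁻¹) := by
  constructor
  · intro z hz
    have hz' : (z:ℂ) ≠ 0 := hz
    have h1 : DifferentiableAt ℂ (g ∘ fun z : ℂ => z⁻¹) z :=
      (hp.diffAt (inv_ne_zero hz')).comp z (differentiableAt_id.inv hz')
    exact (by simpa [Function.comp_def] using h1 :
      DifferentiableAt ℂ (fun z : ℂ => g z⁻¹) z).differentiableWithinAt
  · intro z hz
    have hz' : (z:ℂ) ≠ 0 := hz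
    exact (((hp.symm.diffAt hz').inv (hp.maps' z hz'))).differentiableWithinAt
  · exact fun z hz => hp.maps _ (inv_ne_zero hz)
  · exact fun z hz => inv_ne_zero (hp.maps' _ hz)
  · intro z hz
    rw [hp.inv _ (inv_ne_zero hz), inv_inv]
  · intro z hz
    rw [inv_inv, hp.inv' _ hz]

lemma recip (hp : HoloPair g g') :
    HoloPair (fun z => (g z)⁻¹) (fun w => g' w⁻¹) := by
  constructor
  · intro z hz
    have hz' : (z:ℂ) ≠ 0 := hz
    exact ((hp.diffAt hz').inv (hp.maps z hz')).differentiableWithinAt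
  · intro z hz
    have hz' : (z:ℂ) ≠ 0 := hz
    have h1 : DifferentiableAt ℂ (g' ∘ fun z : ℂ => z⁻¹) z :=
      (hp.symm.diffAt (inv_ne_zero hz')).comp z (differentiableAt_id.inv hz')
    exact (by simpa [Function.comp_def] using h1 :
      DifferentiableAt ℂ (fun z : ℂ => g' z⁻¹) z).differentiableWithinAt
  · exact fun z hz => inv_ne_zero (hp.maps _ hz)
  · exact fun z hz => hp.maps' _ (inv_ne_zero hz)
  · intro z hz
    rw [inv_inv, hp.inv _ hz]
  · intro z hz
    rw [hp.inv' _ (inv_ne_zero hz), inv_inv]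

lemma bddAway (hp : HoloPair g g') :
    ∃ ε > 0, ∀ᶠ z in 𝓝[≠] (0:ℂ), ε ≤ ‖g z - g 1‖ := by
  by_contra hcon
  push_neg at hcon
  have ha : g 1 ≠ 0 := hp.maps 1 one_ne_zero
  have hcl : MapClusterPt (g 1) (𝓝[≠] (0:ℂ)) g := by
    rw [mapClusterPt_iff_frequently]
    intro s hs
    obtain ⟨ε, hε, hball⟩ := Metric.mem_nhds_iff.mp hs
    have h2 := hcon ε hε
    refine h2.mono fun z hz => ?_
    exact hball (by simpa [Metric.mem_ball, dist_eq_norm] using hz)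
  have hg'a : g' (g 1) = 1 := hp.inv 1 one_ne_zero
  have hcont : ContinuousAt g' (g 1) :=
    (hp.diff'.differentiableAt (isOpen_ne.mem_nhds ha)).continuousAt
  have hne : (Filter.map g' (𝓝 (g 1) ⊓ Filter.map g (𝓝[≠] (0:ℂ)))).NeBot :=
    Filter.NeBot.map hcl _
  have hle1 : Filter.map g' (𝓝 (g 1) ⊓ Filter.map g (𝓝[≠] (0:ℂ))) ≤ 𝓝 (1:ℂ) :=
    le_trans (Filter.map_mono inf_le_left) (by have := hcont.tendsto; rw [hg'a] at this; exact this)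
  have hle2 : Filter.map g' (𝓝 (g 1) ⊓ Filter.map g (𝓝[≠] (0:ℂ))) ≤ 𝓝[≠] (0:ℂ) := by
    refine le_trans (Filter.map_mono inf_le_right) ?_
    rw [Filter.map_map]
    have hcongr : (g' ∘ g) =ᶠ[𝓝[≠] (0:ℂ)] id := by
      filter_upwards [self_mem_nhdsWithin] with z hz
      exact hp.inv z hz
    rw [Filter.map_congr hcongr, Filter.map_id]
  have h1 : (𝓝 (1:ℂ) ⊓ 𝓝[≠] (0:ℂ)).NeBot := hne.mono (le_inf hle1 hle2)
  have h3 := h1.mono (inf_le_inf_left _ nhdsWithin_le_nhds)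
  rw [(disjoint_nhds_nhds.mpr (one_ne_zero : (1:ℂ) ≠ 0)).eq_bot] at h3
  exact h3.ne rfl

lemma dichotomy (hp : HoloPair g g') :
    Tendsto g (𝓝[≠] (0:ℂ)) (𝓝 0) ∨
      Tendsto (fun z => (g z)⁻¹) (𝓝[≠] (0:ℂ)) (𝓝 0) := by
  obtain ⟨ε, hε, hev⟩ := hp.bddAway
  set a := g 1 with ha
  set h : ℂ → ℂ := fun z => (g z - a)⁻¹ with hh
  have hevne : ∀ᶠ z in 𝓝[≠] (0:ℂ), g z - a ≠ 0 := by
    refine hev.mono fun z hz h0 => ?_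
    rw [h0, norm_zero] at hz; linarith
  have hd : ∀ᶠ z in 𝓝[≠] (0:ℂ), DifferentiableAt ℂ h z := by
    filter_upwards [hevne, self_mem_nhdsWithin] with z h1 h2
    exact ((hp.diffAt h2).sub_const a).inv h1
  have hb : IsBoundedUnder (· ≤ ·) (𝓝[≠] (0:ℂ)) fun z => ‖h z - h 0‖ := by
    refine ⟨ε⁻¹ + ‖h 0‖, ?_⟩
    rw [Filter.eventually_map]
    filter_upwards [hev] with z h1
    have h2 : ‖h z‖ ≤ ε⁻¹ := by
      rw [hh]
      simp only [norm_inv]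
      exact inv_anti₀ hε h1
    calc ‖h z - h 0‖ ≤ ‖h z‖ + ‖h 0‖ := norm_sub_le _ _
      _ ≤ ε⁻¹ + ‖h 0‖ := by linarith
  have htend :=
    Complex.tendsto_limUnder_of_differentiable_on_punctured_nhds_of_bounded_under hd hb
  set L := limUnder (𝓝[≠] (0:ℂ)) h with hL
  by_cases hL0 : L = 0
  · right
    rw [hL0] at htend
    have hnorm : Tendsto (fun z => ‖h z‖) (𝓝[≠] (0:ℂ)) (𝓝 0) := by
      simpa using htend.norm
    have hpos : Tendsto (fun z => ‖h z‖) (𝓝[≠] (0:ℂ)) (𝓝[>] 0) := by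
      rw [tendsto_nhdsWithin_iff]
      refine ⟨hnorm, hevne.mono fun z hz => ?_⟩
      have : h z ≠ 0 := by rw [hh]; exact inv_ne_zero hz
      simpa [Set.mem_Ioi] using norm_pos_iff.mpr this
    have h1 : Tendsto (fun z => ‖h z‖⁻¹) (𝓝[≠] (0:ℂ)) atTop :=
      tendsto_inv_nhdsGT_zero.comp hpos
    have h2 : Tendsto (fun z => ‖g z - a‖) (𝓝[≠] (0:ℂ)) atTop := by
      refine Tendsto.congr' ?_ h1
      filter_upwards [hevne] with z hz
      rw [hh]; simp [norm_inv]
    have h3 : Tendsto (fun z => ‖g z‖) (𝓝[≠] (0:ℂ)) atTop := by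
      refine tendsto_atTop_mono' _ ?_ (tendsto_atTop_add_const_right _ (-‖a‖) h2)
      refine Filter.Eventually.of_forall fun z => ?_
      have hineq := norm_sub_le (g z) a
      simp only
      linarith
    rw [tendsto_zero_iff_norm_tendsto_zero]
    simpa [norm_inv, Pi.inv_def] using h3.inv_tendsto_atTop
  · left
    have hinv : Tendsto (fun z => (h z)⁻¹) (𝓝[≠] (0:ℂ)) (𝓝 L⁻¹) := htend.inv₀ hL0
    have hgl : Tendsto g (𝓝[≠] (0:ℂ)) (𝓝 (a + L⁻¹)) := by
      have h1 : Tendsto (fun z => a + (h z)⁻¹) (𝓝[≠] (0:ℂ)) (𝓝 (a + L⁻¹)) :=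
        tendsto_const_nhds.add hinv
      refine Tendsto.congr' ?_ h1
      filter_upwards [hevne] with z hz
      rw [hh]; simp
    rcases eq_or_ne (a + L⁻¹) 0 with hz0 | hz0
    · rwa [hz0] at hgl
    · exfalso
      have hcont : ContinuousAt g' (a + L⁻¹) :=
        (hp.diff'.differentiableAt (isOpen_ne.mem_nhds hz0)).continuousAt
      have hcomp : Tendsto (fun z => g' (g z)) (𝓝[≠] (0:ℂ)) (𝓝 (g' (a + L⁻¹))) :=
        hcont.tendsto.comp hgl
      have hid : Tendsto (fun z : ℂ => z) (𝓝[≠] (0:ℂ)) (𝓝 (g' (a + L⁻¹))) := by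
        refine Tendsto.congr' ?_ hcomp
        filter_upwards [self_mem_nhdsWithin] with z hz
        exact hp.inv z hz
      have hid0 : Tendsto (fun z : ℂ => z) (𝓝[≠] (0:ℂ)) (𝓝 0) :=
        tendsto_id.mono_left nhdsWithin_le_nhds
      exact hp.maps' _ hz0 (tendsto_nhds_unique hid hid0)

end HoloPair

lemma entire_update {f : ℂ → ℂ} (hd : DifferentiableOn ℂ f Cstar)
    (h0 : Tendsto f (𝓝[≠] (0:ℂ)) (𝓝 0)) :
    Differentiable ℂ (Function.update f 0 0) := by
  rw [← differentiableOn_univ]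
  rw [← Complex.differentiableOn_compl_singleton_and_continuousAt_iff
    (univ_mem : (univ : Set ℂ) ∈ 𝓝 (0:ℂ))]
  constructor
  · refine (hd.mono fun z hz => hz.2).congr fun z hz => ?_
    exact Function.update_of_ne hz.2 _ _
  · exact continuousAt_update_same.mpr h0

namespace HoloPair

variable {g g' : ℂ → ℂ}

lemma notboth (hp : HoloPair g g') (h0 : Tendsto g (𝓝[≠] (0:ℂ)) (𝓝 0))
    (hinf : Tendsto (fun z => g z⁻¹) (𝓝[≠] (0:ℂ)) (𝓝 0)) : False := by
  have hdiff : Differentiable ℂ (Function.update g 0 0) := entire_update hp.diff h0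
  have hne0 : ∀ᶠ z : ℂ in Bornology.cobounded ℂ, z ≠ 0 := by
    have := (tendsto_norm_cobounded_atTop :
      Filter.Tendsto (norm : ℂ → ℝ) (Bornology.cobounded ℂ) atTop).eventually_ge_atTop (1:ℝ)
    refine this.mono fun z hz h0 => by rw [h0, norm_zero] at hz; linarith
  have hcoc : Tendsto (Function.update g 0 0) (cocompact ℂ) (𝓝 0) := by
    rw [← Metric.cobounded_eq_cocompact]
    have hinv : Tendsto (Inv.inv : ℂ → ℂ) (Bornology.cobounded ℂ) (𝓝[≠] (0:ℂ)) :=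
      tendsto_inv₀_cobounded'
    have hc := hinf.comp hinv
    refine Tendsto.congr' ?_ hc
    filter_upwards [hne0] with z hz
    simp [Function.comp, inv_inv, Function.update_of_ne hz]
  have hconst := hdiff.eq_const_of_tendsto_cocompact hcoc
  have h1 := congrFun hconst 1
  rw [Function.update_of_ne one_ne_zero] at h1
  exact hp.maps 1 one_ne_zero h1

lemma derivAux (hp : HoloPair g g') (h0 : Tendsto g (𝓝[≠] (0:ℂ)) (𝓝 0))
    (h0' : Tendsto g' (𝓝[≠] (0:ℂ)) (𝓝 0)) :
    deriv (Function.update g 0 0) 0 ≠ 0 := by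
  have hUd : Differentiable ℂ (Function.update g 0 0) := entire_update hp.diff h0
  have hU'd : Differentiable ℂ (Function.update g' 0 0) := entire_update hp.diff' h0'
  have hcomp : (Function.update g' 0 0) ∘ (Function.update g 0 0) = id := by
    funext z
    rcases eq_or_ne z 0 with rfl | hz
    · show Function.update g' 0 0 (Function.update g 0 0 0) = 0
      rw [Function.update_self, Function.update_self]
    · have h2 : g z ≠ 0 := hp.maps z hz
      show Function.update g' 0 0 (Function.update g 0 0 z) = z
      rw [Function.update_of_ne hz, Function.update_of_ne h2, hp.inv z hz]
  have hder : HasDerivAt ((Function.update g' 0 0) ∘ (Function.update g 0 0))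
      (deriv (Function.update g' 0 0) ((Function.update g 0 0) 0) *
        deriv (Function.update g 0 0) 0) 0 :=
    ((hU'd _).hasDerivAt).comp 0 ((hUd 0).hasDerivAt)
  rw [hcomp] at hder
  have hone := hder.unique (hasDerivAt_id 0)
  intro hzero
  rw [hzero, mul_zero] at hone
  exact zero_ne_one hone

lemma caseA (hp : HoloPair g g') (h0 : Tendsto g (𝓝[≠] (0:ℂ)) (𝓝 0))
    (hinf : Tendsto (fun z => (g z⁻¹)⁻¹) (𝓝[≠] (0:ℂ)) (𝓝 0)) :
    ∃ c : ℂ, c ≠ 0 ∧ ∀ z : ℂ, z ≠ 0 → g z = c * z := by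
  -- g' tends to 0 at 0
  have hg'0 : Tendsto g' (𝓝[≠] (0:ℂ)) (𝓝 0) := by
    rcases hp.symm.dichotomy with h | h
    · exact h
    · exfalso
      have hginto : Tendsto g (𝓝[≠] (0:ℂ)) (𝓝[≠] (0:ℂ)) := by
        rw [tendsto_nhdsWithin_iff]
        refine ⟨h0, ?_⟩
        filter_upwards [self_mem_nhdsWithin] with z hz
        exact hp.maps z hz
      have hc := h.comp hginto
      have hc2 : Tendsto (fun z : ℂ => z⁻¹) (𝓝[≠] (0:ℂ)) (𝓝 0) := by
        refine Tendsto.congr' ?_ hc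
        filter_upwards [self_mem_nhdsWithin] with z hz
        simp [Function.comp, hp.inv z hz]
      have e1 : ∀ᶠ z : ℂ in 𝓝[≠] (0:ℂ), ‖z‖ < 1 := by
        have hball : Metric.ball (0:ℂ) 1 ∈ 𝓝 (0:ℂ) := Metric.ball_mem_nhds _ one_pos
        filter_upwards [nhdsWithin_le_nhds hball] with z hz
        have hz' : dist (z : ℂ) 0 < 1 := hz
        rwa [dist_zero_right] at hz'
      have e2 : ∀ᶠ z : ℂ in 𝓝[≠] (0:ℂ), ‖z⁻¹‖ < 1 := by
        have hball : Metric.ball (0:ℂ) 1 ∈ 𝓝 (0:ℂ) := Metric.ball_mem_nhds _ one_pos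
        filter_upwards [hc2 hball] with z hz
        have hz' : dist (z⁻¹ : ℂ) 0 < 1 := hz
        rwa [dist_zero_right] at hz'
      obtain ⟨z, hz1, hz2, hz0⟩ := (e1.and (e2.and self_mem_nhdsWithin)).exists
      have hz0' : (z:ℂ) ≠ 0 := hz0
      have hpos : (0:ℝ) < ‖z‖ := norm_pos_iff.mpr hz0'
      rw [norm_inv] at hz2
      have : (1:ℝ) < ‖z‖ := by
        rw [inv_lt_one_iff₀] at hz2
        rcases hz2 with h' | h'
        · linarith
        · exact h'
      linarith
  -- g' tends to ∞ at ∞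
  have hg'inf : Tendsto (fun z : ℂ => (g' z⁻¹)⁻¹) (𝓝[≠] (0:ℂ)) (𝓝 0) := by
    rcases hp.symm.hat.dichotomy with h | h
    · exact (hp.symm.notboth hg'0 h).elim
    · exact h
  have q : HoloPair (fun z : ℂ => (g z⁻¹)⁻¹) (fun w : ℂ => (g' w⁻¹)⁻¹) := hp.hat.recip
  set G := Function.update g 0 0 with hGdef
  set K := Function.update (fun z : ℂ => (g z⁻¹)⁻¹) 0 0 with hKdef
  have hG : Differentiable ℂ G := entire_update hp.diff h0
  have hK : Differentiable ℂ K := entire_update q.diff hinf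
  have hdG : deriv G 0 ≠ 0 := hp.derivAux h0 hg'0
  have hdK : deriv K 0 ≠ 0 := q.derivAux hinf hg'inf
  set h := dslope G 0 with hhdef
  set k := dslope K 0 with hkdef
  have hh : Differentiable ℂ h := by
    rw [← differentiableOn_univ]
    exact (Complex.differentiableOn_dslope univ_mem).mpr hG.differentiableOn
  have hk : Differentiable ℂ k := by
    rw [← differentiableOn_univ]
    exact (Complex.differentiableOn_dslope univ_mem).mpr hK.differentiableOn
  have hh0 : h 0 = deriv G 0 := dslope_same _ _
  have hk0 : k 0 = deriv K 0 := dslope_same _ _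
  have hval : ∀ z : ℂ, z ≠ 0 → h z = z⁻¹ * g z := by
    intro z hz
    rw [hhdef, dslope_of_ne _ hz, slope_def_field, hGdef,
      Function.update_of_ne hz, Function.update_self, sub_zero, sub_zero, div_eq_inv_mul]
  have hkval : ∀ z : ℂ, z ≠ 0 → k z = z⁻¹ * (g z⁻¹)⁻¹ := by
    intro z hz
    rw [hkdef, dslope_of_ne _ hz, slope_def_field, hKdef,
      Function.update_of_ne hz, Function.update_self, sub_zero, sub_zero, div_eq_inv_mul]
  have hk_ne : ∀ z : ℂ, k z ≠ 0 := by
    intro z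
    rcases eq_or_ne z 0 with rfl | hz
    · rw [hk0]; exact hdK
    · rw [hkval z hz]
      exact mul_ne_zero (inv_ne_zero hz) (inv_ne_zero (hp.maps _ (inv_ne_zero hz)))
  have key : ∀ z : ℂ, z ≠ 0 → h z = (k z⁻¹)⁻¹ := by
    intro z hz
    have hz' : z⁻¹ ≠ 0 := inv_ne_zero hz
    rw [hval z hz, hkval _ hz', inv_inv, mul_inv, inv_inv]
  have hne0 : ∀ᶠ z : ℂ in Bornology.cobounded ℂ, z ≠ 0 := by
    have := (tendsto_norm_cobounded_atTop :
      Filter.Tendsto (norm : ℂ → ℝ) (Bornology.cobounded ℂ) atTop).eventually_ge_atTop (1:ℝ)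
    refine this.mono fun z hz h0' => by rw [h0', norm_zero] at hz; linarith
  have htend : Tendsto h (cocompact ℂ) (𝓝 (k 0)⁻¹) := by
    rw [← Metric.cobounded_eq_cocompact]
    have h2 : Tendsto (fun z : ℂ => k z⁻¹) (Bornology.cobounded ℂ) (𝓝 (k 0)) :=
      (hk.continuous.continuousAt.tendsto).comp tendsto_inv₀_cobounded
    have h1 : Tendsto (fun z : ℂ => (k z⁻¹)⁻¹) (Bornology.cobounded ℂ) (𝓝 (k 0)⁻¹) :=
      h2.inv₀ (hk_ne 0)
    refine Tendsto.congr' ?_ h1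
    filter_upwards [hne0] with z hz
    exact (key z hz).symm
  have hconst := hh.eq_const_of_tendsto_cocompact htend
  refine ⟨deriv G 0, hdG, fun z hz => ?_⟩
  have hc0 : deriv G 0 = (k 0)⁻¹ := by rw [← hh0, hconst]; rfl
  have h3 : z⁻¹ * g z = deriv G 0 := by rw [← hval z hz, hconst, hc0]; rfl
  calc g z = z * (z⁻¹ * g z) := by rw [← mul_assoc, mul_inv_cancel₀ hz, one_mul]
    _ = z * deriv G 0 := by rw [h3]
    _ = deriv G 0 * z := mul_comm _ _

lemma classify (hp : HoloPair g g') :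
    ∃ c : ℂ, c ≠ 0 ∧
      ((∀ z : ℂ, z ≠ 0 → g z = c * z) ∨ (∀ z : ℂ, z ≠ 0 → g z = c * z⁻¹)) := by
  rcases hp.dichotomy with h1 | h1 <;> rcases hp.hat.dichotomy with h2 | h2
  · exact (hp.notboth h1 h2).elim
  · obtain ⟨c, hc, hcz⟩ := hp.caseA h1 h2
    exact ⟨c, hc, Or.inl hcz⟩
  · have h3 : Tendsto (fun z : ℂ => ((fun w : ℂ => g w⁻¹) z⁻¹)⁻¹) (𝓝[≠] (0:ℂ)) (𝓝 0) := by
      refine Tendsto.congr' ?_ h1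
      filter_upwards [self_mem_nhdsWithin] with z hz
      simp [inv_inv]
    obtain ⟨c, hc, hcz⟩ := hp.hat.caseA h2 h3
    refine ⟨c, hc, Or.inr fun z hz => ?_⟩
    have h4 := hcz z⁻¹ (inv_ne_zero hz)
    rwa [inv_inv] at h4
  · exact (hp.recip.notboth h1 h2).elim

end HoloPair

/-- a conjugating mapping of `ℂ*` fixing `1` is multiplicative,
hence a group automorphism of `ℂ*`; moreover `φ(-1) = -1` and `φ(i) = ±i`. -/
theorem stmt2 (φ : ℂ → ℂ) (hφ : ConjugatingCstar φ) (h1 : φ 1 = 1) :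
    (∀ a ∈ Cstar, ∀ b ∈ Cstar, φ (a * b) = φ a * φ b) ∧
    φ (-1) = -1 ∧ (φ Complex.I = Complex.I ∨ φ Complex.I = -Complex.I) := by
  obtain ⟨hbij, hconj⟩ := hφ
  have hφne : ∀ z : ℂ, z ≠ 0 → φ z ≠ 0 := fun z hz => hbij.mapsTo hz
  have hinj : ∀ z w : ℂ, z ≠ 0 → w ≠ 0 → φ z = φ w → z = w := fun z w hz hw h =>
    hbij.injOn hz hw h
  have main : ∀ a : ℂ, a ≠ 0 →
      (∀ z : ℂ, z ≠ 0 → φ (a * z) = φ a * φ z) ∨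
      (∀ z : ℂ, z ≠ 0 → φ (a * z) = φ a * (φ z)⁻¹) := by
    intro a ha
    obtain ⟨g, hg, hgeq⟩ := hconj (fun z => a * z)
      ⟨(differentiable_id.const_mul a).differentiableOn,
       fun z hz => mul_ne_zero ha hz⟩
    obtain ⟨g', hg', hgeq'⟩ := hconj (fun z => a⁻¹ * z)
      ⟨(differentiable_id.const_mul a⁻¹).differentiableOn,
       fun z hz => mul_ne_zero (inv_ne_zero ha) hz⟩
    have pair : HoloPair g g' := by
      constructor
      · exact hg.1
      · exact hg'.1
      · intro z hz
        obtain ⟨w, hw, hwz⟩ := hbij.surjOn hz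
        rw [← hwz, hgeq w hw]
        exact hφne _ (mul_ne_zero ha hw)
      · intro z hz
        obtain ⟨w, hw, hwz⟩ := hbij.surjOn hz
        rw [← hwz, hgeq' w hw]
        exact hφne _ (mul_ne_zero (inv_ne_zero ha) hw)
      · intro z hz
        obtain ⟨w, hw, hwz⟩ := hbij.surjOn hz
        have hw' : (w:ℂ) ≠ 0 := hw
        rw [← hwz, hgeq w hw, hgeq' (a*w) (mul_ne_zero ha hw'), inv_mul_cancel_left₀ ha]
      · intro z hz
        obtain ⟨w, hw, hwz⟩ := hbij.surjOn hz
        have hw' : (w:ℂ) ≠ 0 := hw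
        rw [← hwz, hgeq' w hw, hgeq (a⁻¹*w) (mul_ne_zero (inv_ne_zero ha) hw'),
          mul_inv_cancel_left₀ ha]
    obtain ⟨c, hc, hcase⟩ := pair.classify
    have h4 : g 1 = φ a := by
      have h5 := hgeq 1 one_ne_zero
      rwa [h1, mul_one] at h5
    rcases hcase with hmul | hinv
    · left
      intro z hz
      have h2 := hgeq z hz
      have h3 := hmul (φ z) (hφne z hz)
      have h5 := hmul 1 one_ne_zero
      rw [mul_one] at h5
      have hca : c = φ a := h5.symm.trans h4
      rw [← h2, h3, hca]
    · right
      intro z hz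
      have h2 := hgeq z hz
      have h3 := hinv (φ z) (hφne z hz)
      have h5 := hinv 1 one_ne_zero
      rw [inv_one, mul_one] at h5
      have hca : c = φ a := h5.symm.trans h4
      rw [← h2, h3, hca]
  have hT : ∀ a : ℂ, a ≠ 0 → (∀ z : ℂ, z ≠ 0 → φ (a * z) = φ a * (φ z)⁻¹) →
      a = 1 ∨ a = -1 := by
    intro a ha ht
    have h2 := ht a ha
    rw [mul_inv_cancel₀ (hφne a ha)] at h2
    have haa : a * a = 1 := hinj _ _ (mul_ne_zero ha ha) one_ne_zero (by rw [h2, h1])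
    have h3 : (a - 1) * (a + 1) = 0 := by linear_combination haa
    rcases mul_eq_zero.mp h3 with h | h
    · exact Or.inl (sub_eq_zero.mp h)
    · exact Or.inr (eq_neg_of_add_eq_zero_left h)
  have hS : ∀ a : ℂ, a ≠ 0 → ∀ z : ℂ, z ≠ 0 → φ (a * z) = φ a * φ z := by
    have hSne : ∀ b : ℂ, b ≠ 0 → b ≠ 1 → b ≠ -1 →
        ∀ z : ℂ, z ≠ 0 → φ (b * z) = φ b * φ z := by
      intro b hb hb1 hbm
      rcases main b hb with hh | hh
      · exact hh
      · rcases hT b hb hh with h' | h'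
        · exact absurd h' hb1
        · exact absurd h' hbm
    intro a ha
    rcases main a ha with h | h
    · exact h
    · rcases hT a ha h with rfl | rfl
      · intro z hz; rw [one_mul, h1, one_mul]
      · exfalso
        have hm1 : (-1:ℂ) ≠ 0 := by norm_num
        have key : ∀ b : ℂ, b ≠ 0 → b ≠ 1 → b ≠ -1 → φ b * φ b = 1 := by
          intro b hb hb1 hbm
          have e1 : φ (b * -1) = φ b * φ (-1) := hSne b hb hb1 hbm (-1) hm1
          have e2 : φ (-1 * b) = φ (-1) * (φ b)⁻¹ := h b hb
          rw [mul_comm b (-1), e2] at e1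
          have hφm1 := hφne (-1) hm1
          have hφb := hφne b hb
          have e3 : φ (-1) = φ b * φ (-1) * φ b := by
            calc φ (-1) = (φ (-1) * (φ b)⁻¹) * φ b := by field_simp
            _ = (φ b * φ (-1)) * φ b := by rw [e1]
          have e4 : φ (-1) * (φ b * φ b) = φ (-1) * 1 := by linear_combination -e3
          exact mul_left_cancel₀ hφm1 e4
        have k2 := key 2 (by norm_num) (by norm_num) (by norm_num)
        have k3 := key 3 (by norm_num) (by norm_num) (by norm_num)
        have n2 : φ 2 ≠ 1 := fun e => (by norm_num : (2:ℂ) ≠ 1)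
          (hinj 2 1 (by norm_num) one_ne_zero (by rw [e, h1]))
        have n3 : φ 3 ≠ 1 := fun e => (by norm_num : (3:ℂ) ≠ 1)
          (hinj 3 1 (by norm_num) one_ne_zero (by rw [e, h1]))
        have ne23 : φ 2 ≠ φ 3 := fun e => (by norm_num : (2:ℂ) ≠ 3)
          (hinj 2 3 (by norm_num) (by norm_num) e)
        have p2 : φ 2 = -1 := by
          have hf : (φ 2 - 1) * (φ 2 + 1) = 0 := by linear_combination k2
          rcases mul_eq_zero.mp hf with h' | h'
          · exact absurd (sub_eq_zero.mp h') n2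
          · exact eq_neg_of_add_eq_zero_left h'
        have p3 : φ 3 = -1 := by
          have hf : (φ 3 - 1) * (φ 3 + 1) = 0 := by linear_combination k3
          rcases mul_eq_zero.mp hf with h' | h'
          · exact absurd (sub_eq_zero.mp h') n3
          · exact eq_neg_of_add_eq_zero_left h'
        exact ne23 (p2.trans p3.symm)
  have hm1 : (-1:ℂ) ≠ 0 := by norm_num
  have hsq : φ (-1) * φ (-1) = 1 := by
    have e := hS (-1) hm1 (-1) hm1
    rw [show ((-1:ℂ) * -1) = 1 by norm_num, h1] at e
    exact e.symm
  have hne1 : φ (-1) ≠ 1 := fun e => (by norm_num : (-1:ℂ) ≠ 1)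
    (hinj (-1) 1 hm1 one_ne_zero (by rw [e, h1]))
  have pm1 : φ (-1) = -1 := by
    have hf : (φ (-1) - 1) * (φ (-1) + 1) = 0 := by linear_combination hsq
    rcases mul_eq_zero.mp hf with h' | h'
    · exact absurd (sub_eq_zero.mp h') hne1
    · exact eq_neg_of_add_eq_zero_left h'
  refine ⟨fun a ha b hb => hS a ha b hb, pm1, ?_⟩
  have hIne : Complex.I ≠ 0 := Complex.I_ne_zero
  have hI : φ Complex.I * φ Complex.I = -1 := by
    have e := hS Complex.I hIne Complex.I hIne
    rw [Complex.I_mul_I, pm1] at e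
    exact e.symm
  have hf : (φ Complex.I - Complex.I) * (φ Complex.I + Complex.I) = 0 := by
    linear_combination hI - Complex.I_mul_I
  rcases mul_eq_zero.mp hf with h' | h'
  · exact Or.inl (sub_eq_zero.mp h')
  · exact Or.inr (eq_neg_of_add_eq_zero_left h')
end
end
end

section
/- Let γ > 0 be irrational and let F = (F₁, F₂) : D_γ* → D_γ* be holomorphic. Then there exist real numbers α ≥ 0 and β with 0 < β ≤ 1 (and β < 1 in case α = 0) such that |F₁(z)||F₂(z)|^γ = β·(|z₁||z₂|^γ)^α for all z ∈ D_γ*. -/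
open Complex Set

noncomputable section

section LogMachinery

open intervalIntegral MeasureTheory

/-- rectangle-closed subsets of ℂ -/
def RectCl (U : Set ℂ) : Prop :=
  ∀ z ∈ U, ∀ w ∈ U, ∀ x y : ℝ, x ∈ Set.uIcc z.re w.re → y ∈ Set.uIcc z.im w.im →
    (x : ℂ) + y * I ∈ U

lemma rectCl_univ : RectCl Set.univ := fun _ _ _ _ _ _ _ _ => trivial

lemma rectCl_lhp : RectCl {z : ℂ | z.re < 0} := by
  intro z hz w hw x y hx hy
  simp only [Set.mem_setOf_eq] at hz hw ⊢
  have : x ≤ max z.re w.re := by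
    rw [Set.uIcc] at hx; exact hx.2
  simpa using lt_of_le_of_lt (by simpa using this) (max_lt hz hw)

lemma mem_of_re_im {U : Set ℂ} (z : ℂ) (hz : z ∈ U) : (z.re : ℂ) + z.im * I ∈ U := by
  rwa [Complex.re_add_im]

lemma intble_horiz {U : Set ℂ} (hrc : RectCl U) {f : ℂ → ℂ} (hf : ContinuousOn f U)
    {x1 x2 y1 y2 : ℝ} (h1 : (x1 : ℂ) + y1 * I ∈ U) (h2 : (x2 : ℂ) + y2 * I ∈ U)
    {a b y : ℝ} (ha : a ∈ Set.uIcc x1 x2) (hb : b ∈ Set.uIcc x1 x2)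
    (hy : y ∈ Set.uIcc y1 y2) :
    IntervalIntegrable (fun t : ℝ => f ((t : ℂ) + y * I)) volume a b := by
  have hmem : ∀ t ∈ Set.uIcc a b, (t : ℂ) + y * I ∈ U := by
    intro t ht
    have ht' : t ∈ Set.uIcc x1 x2 := Set.uIcc_subset_uIcc ha hb ht
    have := hrc _ h1 _ h2 t y (by simpa using ht') (by simpa using hy)
    simpa using this
  apply ContinuousOn.intervalIntegrable
  exact hf.comp ((Complex.continuous_ofReal.add continuous_const).continuousOn) hmem

lemma intble_vert {U : Set ℂ} (hrc : RectCl U) {f : ℂ → ℂ} (hf : ContinuousOn f U)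
    {x1 x2 y1 y2 : ℝ} (h1 : (x1 : ℂ) + y1 * I ∈ U) (h2 : (x2 : ℂ) + y2 * I ∈ U)
    {a b x : ℝ} (ha : a ∈ Set.uIcc y1 y2) (hb : b ∈ Set.uIcc y1 y2)
    (hx : x ∈ Set.uIcc x1 x2) :
    IntervalIntegrable (fun t : ℝ => f ((x : ℂ) + t * I)) volume a b := by
  have hmem : ∀ t ∈ Set.uIcc a b, (x : ℂ) + t * I ∈ U := by
    intro t ht
    have ht' : t ∈ Set.uIcc y1 y2 := Set.uIcc_subset_uIcc ha hb ht
    have := hrc _ h1 _ h2 x t (by simpa using hx) (by simpa using ht')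
    simpa using this
  apply ContinuousOn.intervalIntegrable
  exact hf.comp (Continuous.continuousOn (by continuity)) hmem


/-- primitive candidate along an L-shaped path -/
def Pint (f : ℂ → ℂ) (z₀ w : ℂ) : ℂ :=
  (∫ t in z₀.re..w.re, f ((t : ℂ) + z₀.im * I)) + I * ∫ t in z₀.im..w.im, f ((w.re : ℂ) + t * I)

lemma Pint_sub {U : Set ℂ} (hrc : RectCl U) {f : ℂ → ℂ} (hf : DifferentiableOn ℂ f U)
    {z₀ z w : ℂ} (h0 : z₀ ∈ U) (hz : z ∈ U) (hw : w ∈ U) :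
    Pint f z₀ w - Pint f z₀ z =
      (∫ t in z.re..w.re, f ((t : ℂ) + z.im * I)) + I * ∫ t in z.im..w.im, f ((w.re : ℂ) + t * I) := by
  have hc : ContinuousOn f U := hf.continuousOn
  have h0' := (Complex.re_add_im z₀) ▸ h0
  have hz' : (z.re : ℂ) + z.im * I ∈ U := by rwa [Complex.re_add_im]
  have hw' : (w.re : ℂ) + w.im * I ∈ U := by rwa [Complex.re_add_im]
  have h0'' : (z₀.re : ℂ) + z₀.im * I ∈ U := by rwa [Complex.re_add_im]
  -- auxiliary corners
  have ha1 : (z.re : ℂ) + z₀.im * I ∈ U :=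
    hrc _ h0'' _ hz' z.re z₀.im (by simp) (by simp)
  have ha2 : (w.re : ℂ) + z₀.im * I ∈ U :=
    hrc _ h0'' _ hw' w.re z₀.im (by simp) (by simp)
  have ha3 : (w.re : ℂ) + z.im * I ∈ U :=
    hrc _ hz' _ hw' w.re z.im (by simp) (by simp)
  -- split horizontal
  have hsplit_h :
      (∫ t in z₀.re..w.re, f ((t : ℂ) + z₀.im * I)) =
      (∫ t in z₀.re..z.re, f ((t : ℂ) + z₀.im * I)) +
      (∫ t in z.re..w.re, f ((t : ℂ) + z₀.im * I)) := by
    refine (integral_add_adjacent_intervals ?_ ?_).symm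
    · exact intble_horiz hrc hc h0'' ha1 (by simp) (by simp) (by simp)
    · exact intble_horiz hrc hc ha1 ha2 (by simp) (by simp) (by simp)
  -- split vertical
  have hsplit_v :
      (∫ t in z₀.im..w.im, f ((w.re : ℂ) + t * I)) =
      (∫ t in z₀.im..z.im, f ((w.re : ℂ) + t * I)) +
      (∫ t in z.im..w.im, f ((w.re : ℂ) + t * I)) := by
    refine (integral_add_adjacent_intervals ?_ ?_).symm
    · exact intble_vert hrc hc ha2 ha3 (by simp) (by simp) (by simp)
    · exact intble_vert hrc hc ha3 hw' (by simp) (by simp) (by simp)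
  -- Goursat on the rectangle with corners (z.re, z₀.im) and (w.re, z.im)
  have hG := integral_boundary_rect_eq_zero_of_differentiableOn f
      ((z.re : ℂ) + z₀.im * I) ((w.re : ℂ) + z.im * I) ?_
  · simp only [Complex.add_re, Complex.ofReal_re, Complex.mul_I_re, Complex.ofReal_im,
      neg_zero, add_zero, Complex.add_im, Complex.mul_I_im, zero_add, smul_eq_mul] at hG
    simp only [Pint]
    rw [hsplit_h, hsplit_v]
    linear_combination hG
  · -- the rectangle is inside U
    refine hf.mono ?_
    intro p hp
    rw [Complex.mem_reProdIm] at hp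
    simp only [Complex.add_re, Complex.ofReal_re, Complex.mul_I_re, Complex.ofReal_im,
      neg_zero, add_zero, Complex.add_im, Complex.mul_I_im, zero_add] at hp
    have := hrc _ ha1 _ ha3 p.re p.im (by simpa using hp.1) (by simpa using hp.2)
    simpa [Complex.re_add_im] using this

lemma Pint_hasDerivAt {U : Set ℂ} (hU : IsOpen U) (hrc : RectCl U)
    {f : ℂ → ℂ} (hf : DifferentiableOn ℂ f U)
    {z₀ z : ℂ} (h0 : z₀ ∈ U) (hz : z ∈ U) : HasDerivAt (Pint f z₀) (f z) z := by
  rw [hasDerivAt_iff_isLittleO, Asymptotics.isLittleO_iff]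
  intro c hc
  have hfc : ContinuousAt f z := (hf.differentiableAt (hU.mem_nhds hz)).continuousAt
  obtain ⟨δ1, hδ1, hδ1'⟩ := Metric.continuousAt_iff.mp hfc (c / 2) (by positivity)
  obtain ⟨δ2, hδ2, hδ2'⟩ := Metric.isOpen_iff.mp hU z hz
  set δ := min δ1 δ2 with hδdef
  have hδ : 0 < δ := lt_min hδ1 hδ2
  have hball : Metric.ball z δ ⊆ U := fun w hw =>
    hδ2' (Metric.ball_subset_ball (min_le_right _ _) hw)
  filter_upwards [Metric.ball_mem_nhds z (half_pos hδ)] with w hw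
  have hwz : ‖(w - z)‖ < δ / 2 := by
    rw [Metric.mem_ball, Complex.dist_eq] at hw; exact hw
  have hwU : w ∈ U := hball (by
    rw [Metric.mem_ball, Complex.dist_eq]
    exact lt_trans hwz (by linarith))
  have hz' : (z.re : ℂ) + z.im * I ∈ U := by rwa [Complex.re_add_im]
  have hw' : (w.re : ℂ) + w.im * I ∈ U := by rwa [Complex.re_add_im]
  have ha3 : (w.re : ℂ) + z.im * I ∈ U :=
    hrc _ hz' _ hw' w.re z.im (by simp) (by simp)
  have hre : |w.re - z.re| ≤ ‖(w - z)‖ := by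
    simpa [Complex.sub_re] using Complex.abs_re_le_norm (w - z)
  have him : |w.im - z.im| ≤ ‖(w - z)‖ := by
    simpa [Complex.sub_im] using Complex.abs_im_le_norm (w - z)
  -- integrability
  have hintA : IntervalIntegrable (fun t : ℝ => f ((t : ℂ) + z.im * I)) volume z.re w.re :=
    intble_horiz hrc hf.continuousOn hz' ha3 (by simp) (by simp) (by simp)
  have hintB : IntervalIntegrable (fun t : ℝ => f ((w.re : ℂ) + t * I)) volume z.im w.im :=
    intble_vert hrc hf.continuousOn ha3 hw' (by simp) (by simp) (by simp)
  -- difference formula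
  have hwz_eq : (w - z) = ((w.re - z.re : ℝ) : ℂ) + ((w.im - z.im : ℝ) : ℂ) * I := by
    simp [Complex.ext_iff]
  have eqA : (∫ t in z.re..w.re, (f ((t : ℂ) + z.im * I) - f z)) =
      (∫ t in z.re..w.re, f ((t : ℂ) + z.im * I)) - ((w.re - z.re : ℝ) : ℂ) * f z := by
    rw [integral_sub hintA intervalIntegrable_const, intervalIntegral.integral_const]
    simp [Complex.real_smul]
  have eqB : (∫ t in z.im..w.im, (f ((w.re : ℂ) + t * I) - f z)) =
      (∫ t in z.im..w.im, f ((w.re : ℂ) + t * I)) - ((w.im - z.im : ℝ) : ℂ) * f z := by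
    rw [integral_sub hintB intervalIntegrable_const, intervalIntegral.integral_const]
    simp [Complex.real_smul]
  have main : Pint f z₀ w - Pint f z₀ z - (w - z) * f z =
      (∫ t in z.re..w.re, (f ((t : ℂ) + z.im * I) - f z)) +
      I * (∫ t in z.im..w.im, (f ((w.re : ℂ) + t * I) - f z)) := by
    rw [eqA, eqB, Pint_sub hrc hf h0 hz hwU]
    linear_combination (-(f z)) * hwz_eq
  -- bounds
  have hboundA : ‖∫ t in z.re..w.re, (f ((t : ℂ) + z.im * I) - f z)‖ ≤
      (c / 2) * |w.re - z.re| := by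
    apply intervalIntegral.norm_integral_le_of_norm_le_const
    intro t ht
    have htle : |t - z.re| ≤ |w.re - z.re| := by
      rcases Set.mem_uIoc.mp ht with ⟨h1, h2⟩ | ⟨h1, h2⟩ <;>
        · rw [abs_le]
          rcases abs_cases (w.re - z.re) with ⟨he, _⟩ | ⟨he, _⟩ <;> constructor <;> linarith
    have hdist : dist ((t : ℂ) + z.im * I) z < δ1 := by
      rw [Complex.dist_eq]
      have : (t : ℂ) + z.im * I - z = ((t - z.re : ℝ) : ℂ) := by simp [Complex.ext_iff]
      rw [this, Complex.norm_real, Real.norm_eq_abs]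
      calc |t - z.re| ≤ |w.re - z.re| := htle
        _ ≤ ‖(w - z)‖ := hre
        _ < δ1 := by
            have h3 : δ ≤ δ1 := min_le_left _ _
            linarith
    have := hδ1' hdist
    rw [dist_eq_norm] at this
    exact le_of_lt this
  have hboundB : ‖∫ t in z.im..w.im, (f ((w.re : ℂ) + t * I) - f z)‖ ≤
      (c / 2) * |w.im - z.im| := by
    apply intervalIntegral.norm_integral_le_of_norm_le_const
    intro t ht
    have htle : |t - z.im| ≤ |w.im - z.im| := by
      rcases Set.mem_uIoc.mp ht with ⟨h1, h2⟩ | ⟨h1, h2⟩ <;>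
        · rw [abs_le]
          rcases abs_cases (w.im - z.im) with ⟨he, _⟩ | ⟨he, _⟩ <;> constructor <;> linarith
    have hdist : dist ((w.re : ℂ) + t * I) z < δ1 := by
      rw [Complex.dist_eq]
      have heq : (w.re : ℂ) + t * I - z = ((w.re - z.re : ℝ) : ℂ) + ((t - z.im : ℝ) : ℂ) * I := by
        simp [Complex.ext_iff]
      rw [heq]
      calc ‖(((w.re - z.re : ℝ) : ℂ) + ((t - z.im : ℝ) : ℂ) * I)‖
          ≤ ‖((w.re - z.re : ℝ) : ℂ)‖ + ‖(((t - z.im : ℝ) : ℂ) * I)‖ :=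
            norm_add_le _ _
        _ = |w.re - z.re| + |t - z.im| := by
            rw [norm_mul, Complex.norm_I, mul_one, Complex.norm_real, Complex.norm_real, Real.norm_eq_abs, Real.norm_eq_abs]
        _ ≤ ‖(w - z)‖ + ‖(w - z)‖ :=
            add_le_add hre (le_trans htle him)
        _ < δ1 := by
            have h2 : ‖(w - z)‖ < δ / 2 := hwz
            have hδle : δ ≤ δ1 := min_le_left _ _
            linarith
    have := hδ1' hdist
    rw [dist_eq_norm] at this
    exact le_of_lt this
  -- put together
  calc ‖Pint f z₀ w - Pint f z₀ z - (w - z) • f z‖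
      = ‖(∫ t in z.re..w.re, (f ((t : ℂ) + z.im * I) - f z)) +
          I * (∫ t in z.im..w.im, (f ((w.re : ℂ) + t * I) - f z))‖ := by
        rw [smul_eq_mul, main]
    _ ≤ ‖∫ t in z.re..w.re, (f ((t : ℂ) + z.im * I) - f z)‖ +
        ‖I * (∫ t in z.im..w.im, (f ((w.re : ℂ) + t * I) - f z))‖ := norm_add_le _ _
    _ ≤ (c / 2) * |w.re - z.re| + (c / 2) * |w.im - z.im| := by
        rw [norm_mul, Complex.norm_I, one_mul]
        exact add_le_add hboundA hboundB
    _ ≤ (c / 2) * ‖(w - z)‖ + (c / 2) * ‖(w - z)‖ := by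
        have h1 : (c / 2) * |w.re - z.re| ≤ (c / 2) * ‖(w - z)‖ := by
          apply mul_le_mul_of_nonneg_left hre (by positivity)
        have h2 : (c / 2) * |w.im - z.im| ≤ (c / 2) * ‖(w - z)‖ := by
          apply mul_le_mul_of_nonneg_left him (by positivity)
        linarith
    _ = c * ‖w - z‖ := by ring

/-- existence of a holomorphic logarithm on an open convex rectangle-closed set -/
lemma exists_log {U : Set ℂ} (hU : IsOpen U) (hrc : RectCl U) (hconv : Convex ℝ U)
    {g : ℂ → ℂ} (hg : DifferentiableOn ℂ g U) (hg0 : ∀ z ∈ U, g z ≠ 0)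
    {z₀ : ℂ} (h0 : z₀ ∈ U) :
    ∃ L : ℂ → ℂ, (∀ z ∈ U, HasDerivAt L (deriv g z / g z) z) ∧
      ∀ z ∈ U, Complex.exp (L z) = g z := by
  have han : AnalyticOnNhd ℂ g U := hg.analyticOnNhd hU
  have hd' : DifferentiableOn ℂ (deriv g) U := han.deriv.differentiableOn
  set f : ℂ → ℂ := fun z => deriv g z / g z with hfdef
  have hf : DifferentiableOn ℂ f U := hd'.div hg hg0
  set L : ℂ → ℂ := fun z => Complex.log (g z₀) + Pint f z₀ z with hLdef
  have hL : ∀ z ∈ U, HasDerivAt L (f z) z := fun z hz =>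
    (Pint_hasDerivAt hU hrc hf h0 hz).const_add _
  refine ⟨L, hL, ?_⟩
  set h : ℂ → ℂ := fun z => g z * Complex.exp (-L z) with hhdef
  have hder : ∀ z ∈ U, HasDerivAt h 0 z := by
    intro z hz
    have hgz : HasDerivAt g (deriv g z) z :=
      (hg.differentiableAt (hU.mem_nhds hz)).hasDerivAt
    have hexp : HasDerivAt (fun w => Complex.exp (-L w)) (Complex.exp (-L z) * (-f z)) z :=
      ((hL z hz).neg).cexp
    have := hgz.mul hexp
    have heq : deriv g z * Complex.exp (-L z) + g z * (Complex.exp (-L z) * -f z) = 0 := by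
      rw [hfdef]
      field_simp [hg0 z hz]
      ring
    rwa [heq] at this
  have hdiff : DifferentiableOn ℂ h U := fun z hz =>
    (((hg.differentiableAt (hU.mem_nhds hz)).mul
      ((hL z hz).differentiableAt.neg.cexp)).differentiableWithinAt)
  have hconst : ∀ z ∈ U, h z = h z₀ := by
    intro z hz
    apply hconv.is_const_of_fderivWithin_eq_zero hdiff _ hz h0
    intro x hx
    have hfd : HasFDerivAt h (0 : ℂ →L[ℂ] ℂ) x := by
      have h00 : (ContinuousLinearMap.toSpanSingleton ℂ (0 : ℂ)) = 0 := by
        ext w; simp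
      have := (hder x hx).hasFDerivAt
      rwa [h00] at this
    exact hfd.hasFDerivWithinAt.fderivWithin (hU.uniqueDiffOn x hx)
  intro z hz
  have h1 : h z = 1 := by
    rw [hconst z hz]
    have hp0 : Pint f z₀ z₀ = 0 := by simp [Pint]
    show g z₀ * Complex.exp (-(Complex.log (g z₀) + Pint f z₀ z₀)) = 1
    rw [hp0, add_zero, Complex.exp_neg, Complex.exp_log (hg0 z₀ h0)]
    field_simp
    exact div_self (hg0 z₀ h0)
  have : g z * Complex.exp (-L z) = 1 := h1
  have hexpL : Complex.exp (L z) ≠ 0 := Complex.exp_ne_zero _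
  calc Complex.exp (L z) = Complex.exp (L z) * (g z * Complex.exp (-L z)) := by rw [this, mul_one]
    _ = g z * (Complex.exp (L z) * Complex.exp (-L z)) := by ring
    _ = g z := by rw [← Complex.exp_add, add_neg_cancel, Complex.exp_zero, mul_one]

/-- directional derivative lemma: if `re ∘ k` is locally constant along direction `c`
then `(c * k').re = 0`. -/
lemma re_dir_deriv_eq_zero {k : ℂ → ℂ} {k' z : ℂ} (hk : HasDerivAt k k' z) (c : ℂ)
    (hre : ∀ᶠ t : ℝ in nhds 0, (k (z + t • c)).re = (k z).re) : (c * k').re = 0 := by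
  have hline : HasDerivAt (fun t : ℝ => z + t • c) c 0 := by
    simpa using ((hasDerivAt_id (0 : ℝ)).smul_const c).const_add z
  have hcomp : HasDerivAt (fun t : ℝ => k (z + t • c)) (c * k') 0 := by
    have hz0 : z + (0 : ℝ) • c = z := by simp
    have hf' : HasFDerivAt k
        ((ContinuousLinearMap.smulRight (1 : ℂ →L[ℂ] ℂ) k').restrictScalars ℝ)
        (z + (0 : ℝ) • c) := by
      rw [hz0]; exact hk.hasFDerivAt.restrictScalars ℝ
    have := hf'.comp_hasDerivAt 0 hline
    simp [smul_eq_mul, mul_comm] at this ⊢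
    exact this
  have hrecomp : HasDerivAt (fun t : ℝ => (k (z + t • c)).re) ((c * k').re) 0 := by
    have := Complex.reCLM.hasFDerivAt.comp_hasDerivAt 0 hcomp
    simp at this ⊢
    exact this
  have hconst : HasDerivAt (fun t : ℝ => (k (z + t • c)).re) 0 0 := by
    have : (fun t : ℝ => (k (z + t • c)).re) =ᶠ[nhds (0:ℝ)] fun _ => (k z).re := hre
    exact (hasDerivAt_const (0:ℝ) ((k z).re)).congr_of_eventuallyEq this
  exact hrecomp.unique hconst


lemma dense_two_periods (a b : ℝ) (ha : a ≠ 0) (hirr : Irrational (b / a)) :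
    Dense {t : ℝ | ∃ m k : ℤ, t = m * a + k * b} := by
  set T : AddSubgroup ℝ :=
    { carrier := {t : ℝ | ∃ m k : ℤ, t = m * a + k * b}
      zero_mem' := ⟨0, 0, by simp⟩
      add_mem' := by
        rintro x y ⟨m, k, rfl⟩ ⟨m', k', rfl⟩
        exact ⟨m + m', k + k', by push_cast; ring⟩
      neg_mem' := by
        rintro x ⟨m, k, rfl⟩
        exact ⟨-m, -k, by push_cast; ring⟩ } with hT
  rcases AddSubgroup.dense_or_cyclic T with h | ⟨g, hg⟩
  · exact h
  · exfalso
    have haT : a ∈ T := ⟨1, 0, by simp⟩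
    have hbT : b ∈ T := ⟨0, 1, by simp⟩
    rw [hg] at haT hbT
    obtain ⟨n, hn⟩ := AddSubgroup.mem_closure_singleton.mp haT
    obtain ⟨m, hm⟩ := AddSubgroup.mem_closure_singleton.mp hbT
    rw [zsmul_eq_mul] at hn hm
    have hg0 : g ≠ 0 := by
      rintro rfl
      exact ha (by rw [← hn]; ring)
    have hn0 : (n : ℝ) ≠ 0 := by
      rintro h
      exact ha (by rw [← hn, h, zero_mul])
    refine hirr ⟨(m : ℚ) / (n : ℚ), ?_⟩
    push_cast
    rw [← hn, ← hm]
    field_simp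

end LogMachinery


/-- The complete half-plane-type domain `D_γ = {z ∈ ℂ² : |z₁||z₂|^γ < 1}`. -/
def Dg (γ : ℝ) : Set (ℂ × ℂ) :=
  {z | ‖z.1‖ * ‖z.2‖ ^ γ < 1}

/-- The non-complete half-plane-type domain `D_γ* = D_γ ∩ (ℂ∖{0})²`. -/
def Dgs (γ : ℝ) : Set (ℂ × ℂ) :=
  Dg γ ∩ {z | z.1 ≠ 0 ∧ z.2 ≠ 0}

/-- for any holomorphic self-map `F` of `D_γ*` the quantity
`|F₁(z)||F₂(z)|^γ` equals `β (|z₁||z₂|^γ)^α` for some `α ≥ 0` and `0 < β ≤ 1`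
(with `β < 1` when `α = 0`). -/
theorem stmt12 (γ : ℝ) (hγpos : 0 < γ) (hγ : Irrational γ)
    (F : ℂ × ℂ → ℂ × ℂ)
    (hF : DifferentiableOn ℂ F (Dgs γ)) (hFm : Set.MapsTo F (Dgs γ) (Dgs γ)) :
    ∃ α β : ℝ, 0 ≤ α ∧ 0 < β ∧ β ≤ 1 ∧ (α = 0 → β < 1) ∧
      ∀ z ∈ Dgs γ,
        ‖(F z).1‖ * ‖(F z).2‖ ^ γ =
          β * (‖z.1‖ * ‖z.2‖ ^ γ) ^ α := by
  classical
  set p : ℂ × ℂ → ℝ := fun z => ‖z.1‖ * ‖z.2‖ ^ γ with hpdef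
  -- membership description
  have hmem_iff : ∀ z : ℂ × ℂ, z ∈ Dgs γ ↔ p z < 1 ∧ z.1 ≠ 0 ∧ z.2 ≠ 0 := by
    intro z; rfl
  -- continuity of p
  have hrpow_cont : Continuous fun x : ℝ => x ^ γ :=
    continuous_iff_continuousAt.2 fun x => Real.continuousAt_rpow_const x γ (Or.inr hγpos.le)
  have hpcont : Continuous p :=
    (continuous_norm.comp continuous_fst).mul
      (hrpow_cont.comp (continuous_norm.comp continuous_snd))
  have hDgo : IsOpen (Dgs γ) := by
    apply IsOpen.inter
    · exact isOpen_lt hpcont continuous_const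
    · have : {z : ℂ × ℂ | z.1 ≠ 0 ∧ z.2 ≠ 0} =
          (Prod.fst ⁻¹' {0}ᶜ ∩ Prod.snd ⁻¹' {0}ᶜ : Set (ℂ × ℂ)) := rfl
      rw [this]
      exact (isOpen_compl_singleton.preimage continuous_fst).inter
        (isOpen_compl_singleton.preimage continuous_snd)
  have hppos : ∀ z ∈ Dgs γ, 0 < p z := by
    intro z hz
    obtain ⟨-, h1, h2⟩ := (hmem_iff z).mp hz
    exact mul_pos ((norm_pos_iff.mpr h1)) (Real.rpow_pos_of_pos ((norm_pos_iff.mpr h2)) γ)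
  -- the flow
  set c : ℂ × ℂ → ℂ → ℂ × ℂ :=
    fun z s => (z.1 * Complex.exp (-(γ : ℂ) * s), z.2 * Complex.exp s) with hcdef
  have hpc : ∀ z : ℂ × ℂ, ∀ s : ℂ, p (c z s) = p z := by
    intro z s
    have h1 : ‖(z.1 * Complex.exp (-(γ : ℂ) * s))‖ =
        ‖z.1‖ * Real.exp (-(γ * s.re)) := by
      rw [norm_mul, Complex.norm_exp]
      congr 2
      simp [Complex.mul_re]
    have h2 : ‖(z.2 * Complex.exp s)‖ ^ γ =
        ‖z.2‖ ^ γ * Real.exp (γ * s.re) := by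
      rw [norm_mul, Complex.norm_exp,
        Real.mul_rpow (norm_nonneg _) (Real.exp_pos _).le, ← Real.exp_mul,
        mul_comm s.re γ]
    show ‖(z.1 * Complex.exp (-(γ : ℂ) * s))‖ *
        ‖(z.2 * Complex.exp s)‖ ^ γ = p z
    rw [h1, h2]
    have : Real.exp (-(γ * s.re)) * Real.exp (γ * s.re) = 1 := by
      rw [← Real.exp_add]; simp
    calc ‖z.1‖ * Real.exp (-(γ * s.re)) *
          (‖z.2‖ ^ γ * Real.exp (γ * s.re))
        = (‖z.1‖ * ‖z.2‖ ^ γ) *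
          (Real.exp (-(γ * s.re)) * Real.exp (γ * s.re)) := by ring
      _ = p z := by rw [this, mul_one]
  have hcin : ∀ z ∈ Dgs γ, ∀ s : ℂ, c z s ∈ Dgs γ := by
    intro z hz s
    obtain ⟨h0, h1, h2⟩ := (hmem_iff z).mp hz
    refine (hmem_iff _).mpr ⟨?_, ?_, ?_⟩
    · rw [hpc z s]; exact h0
    · exact mul_ne_zero h1 (Complex.exp_ne_zero _)
    · exact mul_ne_zero h2 (Complex.exp_ne_zero _)
  have hc0 : ∀ z : ℂ × ℂ, c z 0 = z := by
    intro z; simp [hcdef]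
  -- STEP 1 : flow invariance
  have hflow : ∀ z ∈ Dgs γ, ∀ s : ℂ, p (F (c z s)) = p (F z) := by
    intro z hz s
    have hcurve : Differentiable ℂ (fun s : ℂ => c z s) := by
      apply Differentiable.prodMk
      · exact (differentiable_const _).mul (((differentiable_id.const_mul _)).cexp)
      · exact (differentiable_const _).mul differentiable_id.cexp
    have hFat : ∀ s : ℂ, DifferentiableAt ℂ F (c z s) := fun s =>
      hF.differentiableAt (hDgo.mem_nhds (hcin z hz s))
    have hg1 : Differentiable ℂ (fun s : ℂ => (F (c z s)).1) := fun s =>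
      ((hFat s).comp s (hcurve s)).fst
    have hg2 : Differentiable ℂ (fun s : ℂ => (F (c z s)).2) := fun s =>
      ((hFat s).comp s (hcurve s)).snd
    have hg10 : ∀ s : ℂ, (F (c z s)).1 ≠ 0 := fun s =>
      ((hmem_iff _).mp (hFm (hcin z hz s))).2.1
    have hg20 : ∀ s : ℂ, (F (c z s)).2 ≠ 0 := fun s =>
      ((hmem_iff _).mp (hFm (hcin z hz s))).2.2
    obtain ⟨L1, hL1d, hL1⟩ := exists_log isOpen_univ rectCl_univ convex_univ
      hg1.differentiableOn (fun s _ => hg10 s) (Set.mem_univ (0 : ℂ))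
    obtain ⟨L2, hL2d, hL2⟩ := exists_log isOpen_univ rectCl_univ convex_univ
      hg2.differentiableOn (fun s _ => hg20 s) (Set.mem_univ (0 : ℂ))
    have habsE : ∀ s : ℂ, Real.exp ((L1 s).re + γ * (L2 s).re) = p (F (c z s)) := by
      intro s
      have e1 : ‖((F (c z s)).1)‖ = Real.exp ((L1 s).re) := by
        rw [← hL1 s (Set.mem_univ s), Complex.norm_exp]
      have e2 : ‖((F (c z s)).2)‖ = Real.exp ((L2 s).re) := by
        rw [← hL2 s (Set.mem_univ s), Complex.norm_exp]
      show Real.exp _ = ‖((F (c z s)).1)‖ * ‖((F (c z s)).2)‖ ^ γ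
      rw [e1, e2, ← Real.exp_mul, ← Real.exp_add, mul_comm (L2 s).re γ]
    set E : ℂ → ℂ := fun s => Complex.exp (L1 s + (γ : ℂ) * L2 s) with hEdef
    have habsE' : ∀ s : ℂ, ‖(E s)‖ = p (F (c z s)) := by
      intro s
      rw [hEdef]
      show ‖(Complex.exp _)‖ = _
      rw [Complex.norm_exp, ← habsE s]
      congr 1
      simp [Complex.add_re, Complex.mul_re]
    have hL1diff : Differentiable ℂ L1 := fun s => (hL1d s (Set.mem_univ s)).differentiableAt
    have hL2diff : Differentiable ℂ L2 := fun s => (hL2d s (Set.mem_univ s)).differentiableAt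
    have hE : Differentiable ℂ E := (hL1diff.add (hL2diff.const_mul _)).cexp
    have hbd : Bornology.IsBounded (Set.range E) := by
      rw [isBounded_iff_forall_norm_le]
      refine ⟨1, ?_⟩
      rintro x ⟨s, rfl⟩
      rw [habsE' s]
      exact (((hmem_iff _).mp (hFm (hcin z hz s))).1).le
    have hEE : E s = E 0 := hE.apply_eq_apply_of_bounded hbd s 0
    have : p (F (c z s)) = p (F (c z 0)) := by
      rw [← habsE' s, ← habsE' 0, hEE]
    rwa [hc0 z] at this
  -- STEP 2 : descent to a function of one variable
  set φ : ℂ → ℝ := fun ζ => p (F (Complex.exp ζ, 1)) with hφdef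
  have hφmem : ∀ ζ : ℂ, ζ.re < 0 → ((Complex.exp ζ, (1 : ℂ)) : ℂ × ℂ) ∈ Dgs γ := by
    intro ζ hζ
    refine (hmem_iff _).mpr ⟨?_, Complex.exp_ne_zero ζ, one_ne_zero⟩
    show ‖(Complex.exp ζ)‖ * ‖(1 : ℂ)‖ ^ γ < 1
    rw [Complex.norm_exp, norm_one, Real.one_rpow, mul_one]
    exact Real.exp_lt_one_iff.mpr hζ
  have h_desc : ∀ z ∈ Dgs γ,
      p (F z) = φ (Complex.log z.1 + (γ : ℂ) * Complex.log z.2) := by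
    intro z hz
    obtain ⟨h0, h1, h2⟩ := (hmem_iff z).mp hz
    have hkey : c z (-Complex.log z.2) =
        (Complex.exp (Complex.log z.1 + (γ : ℂ) * Complex.log z.2), (1 : ℂ)) := by
      rw [hcdef]
      refine Prod.ext ?_ ?_
      · show z.1 * Complex.exp (-(γ : ℂ) * -Complex.log z.2) = _
        rw [Complex.exp_add, Complex.exp_log h1]
        ring_nf
      · show z.2 * Complex.exp (-Complex.log z.2) = 1
        rw [Complex.exp_neg, Complex.exp_log h2]
        exact mul_inv_cancel₀ h2
    have := hflow z hz (-Complex.log z.2)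
    rw [hkey] at this
    exact this.symm
  -- STEP 2b : vertical invariance of φ
  have h_period : ∀ ζ : ℂ, ζ.re < 0 → ∀ t : ℝ,
      (∃ m k : ℤ, t = m * (2 * Real.pi) + k * (2 * Real.pi * γ)) →
      φ (ζ + (t : ℂ) * I) = φ ζ := by
    intro ζ hζ t ht
    obtain ⟨m, k, rfl⟩ := ht
    have hζ' : (ζ + ((m * (2 * Real.pi) + k * (2 * Real.pi * γ) : ℝ) : ℂ) * I).re < 0 := by
      simpa using hζ
    have hexp1 : Complex.exp (((m * (2 * Real.pi) : ℝ) : ℂ) * I) = 1 := by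
      have : (((m * (2 * Real.pi) : ℝ)) : ℂ) * I = (m : ℂ) * (2 * Real.pi * I) := by
        push_cast; ring
      rw [this, Complex.exp_int_mul_two_pi_mul_I]
    have hz' : ((Complex.exp (ζ + ((m * (2 * Real.pi) + k * (2 * Real.pi * γ) : ℝ) : ℂ) * I),
        (1 : ℂ)) : ℂ × ℂ) ∈ Dgs γ := hφmem _ hζ'
    have := hflow _ hz' (((2 * Real.pi * k : ℝ) : ℂ) * I)
    have hkey : c (Complex.exp (ζ + ((m * (2 * Real.pi) + k * (2 * Real.pi * γ) : ℝ) : ℂ) * I),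
        (1 : ℂ)) (((2 * Real.pi * k : ℝ) : ℂ) * I) = (Complex.exp ζ, (1 : ℂ)) := by
      rw [hcdef]
      refine Prod.ext ?_ ?_
      · show Complex.exp _ * Complex.exp (-(γ : ℂ) * (((2 * Real.pi * k : ℝ) : ℂ) * I)) = _
        rw [← Complex.exp_add]
        have heq : ζ + ((m * (2 * Real.pi) + k * (2 * Real.pi * γ) : ℝ) : ℂ) * I +
            -(γ : ℂ) * (((2 * Real.pi * k : ℝ) : ℂ) * I) =
            ζ + (m : ℂ) * (2 * Real.pi * I) := by
          push_cast; ring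
        rw [heq, Complex.exp_add, Complex.exp_int_mul_two_pi_mul_I, mul_one]
      · show 1 * Complex.exp (((2 * Real.pi * k : ℝ) : ℂ) * I) = 1
        rw [one_mul]
        have : (((2 * Real.pi * k : ℝ)) : ℂ) * I = (k : ℂ) * (2 * Real.pi * I) := by
          push_cast; ring
        rw [this, Complex.exp_int_mul_two_pi_mul_I]
    rw [hkey] at this
    exact this.symm
  have h_vert : ∀ ζ : ℂ, ζ.re < 0 → ∀ t : ℝ, φ (ζ + (t : ℂ) * I) = φ ζ := by
    intro ζ hζ
    have hdense : Dense {t : ℝ | ∃ m k : ℤ, t = m * (2 * Real.pi) + k * (2 * Real.pi * γ)} := by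
      apply dense_two_periods _ _ (by positivity)
      have : (2 * Real.pi * γ) / (2 * Real.pi) = γ := by
        field_simp
      rw [this]
      exact hγ
    have hcont : Continuous fun t : ℝ => φ (ζ + (t : ℂ) * I) := by
      have hmapsto : ∀ t : ℝ, ((Complex.exp (ζ + (t : ℂ) * I), (1 : ℂ)) : ℂ × ℂ) ∈ Dgs γ := by
        intro t
        apply hφmem
        simpa using hζ
      have hinner : Continuous fun t : ℝ => ((Complex.exp (ζ + (t : ℂ) * I), (1 : ℂ)) : ℂ × ℂ) :=
        (Complex.continuous_exp.comp (continuous_const.add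
          (Complex.continuous_ofReal.mul continuous_const))).prodMk continuous_const
      exact (hpcont.comp_continuousOn hF.continuousOn).comp_continuous hinner hmapsto
    have hclosed : IsClosed {t : ℝ | φ (ζ + (t : ℂ) * I) = φ ζ} :=
      isClosed_eq hcont continuous_const
    have hsub : {t : ℝ | ∃ m k : ℤ, t = m * (2 * Real.pi) + k * (2 * Real.pi * γ)} ⊆
        {t : ℝ | φ (ζ + (t : ℂ) * I) = φ ζ} := fun t ht => h_period ζ hζ t ht
    have : (Set.univ : Set ℝ) ⊆ {t : ℝ | φ (ζ + (t : ℂ) * I) = φ ζ} := by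
      rw [← hdense.closure_eq]
      exact hclosed.closure_subset_iff.mpr hsub
    intro t
    exact this (Set.mem_univ t)
  -- STEP 3 : analysis on the left half plane
  set LHP : Set ℂ := {w : ℂ | w.re < 0} with hLHP
  have hLo : IsOpen LHP := isOpen_lt Complex.continuous_re continuous_const
  have hLconv : Convex ℝ LHP := convex_halfSpace_re_lt 0
  have hneg1 : (-1 : ℂ) ∈ LHP := by simp [hLHP]
  set g1 : ℂ → ℂ := fun ζ => (F (Complex.exp ζ, 1)).1 with hg1def
  set g2 : ℂ → ℂ := fun ζ => (F (Complex.exp ζ, 1)).2 with hg2def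
  have hinner : Differentiable ℂ fun ζ : ℂ => ((Complex.exp ζ, (1 : ℂ)) : ℂ × ℂ) :=
    Complex.differentiable_exp.prodMk (differentiable_const _)
  have hFat : ∀ ζ ∈ LHP, DifferentiableAt ℂ F ((Complex.exp ζ, (1 : ℂ))) := fun ζ hζ =>
    hF.differentiableAt (hDgo.mem_nhds (hφmem ζ hζ))
  have hg1diff : DifferentiableOn ℂ g1 LHP := fun ζ hζ =>
    (((hFat ζ hζ).comp ζ (hinner ζ)).fst).differentiableWithinAt
  have hg2diff : DifferentiableOn ℂ g2 LHP := fun ζ hζ =>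
    (((hFat ζ hζ).comp ζ (hinner ζ)).snd).differentiableWithinAt
  have hg10 : ∀ ζ ∈ LHP, g1 ζ ≠ 0 := fun ζ hζ => ((hmem_iff _).mp (hFm (hφmem ζ hζ))).2.1
  have hg20 : ∀ ζ ∈ LHP, g2 ζ ≠ 0 := fun ζ hζ => ((hmem_iff _).mp (hFm (hφmem ζ hζ))).2.2
  obtain ⟨L1, hL1d, hL1⟩ := exists_log hLo rectCl_lhp hLconv hg1diff hg10 hneg1
  obtain ⟨L2, hL2d, hL2⟩ := exists_log hLo rectCl_lhp hLconv hg2diff hg20 hneg1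
  set k : ℂ → ℂ := fun ζ => deriv g1 ζ / g1 ζ + (γ : ℂ) * (deriv g2 ζ / g2 ζ) with hkdef
  set H : ℂ → ℂ := fun ζ => L1 ζ + (γ : ℂ) * L2 ζ with hHdef
  have hHd : ∀ ζ ∈ LHP, HasDerivAt H (k ζ) ζ := fun ζ hζ =>
    (hL1d ζ hζ).add ((hL2d ζ hζ).const_mul _)
  have hHre : ∀ ζ ∈ LHP, Real.exp ((H ζ).re) = φ ζ := by
    intro ζ hζ
    have e1 : ‖(g1 ζ)‖ = Real.exp ((L1 ζ).re) := by
      rw [← hL1 ζ hζ, Complex.norm_exp]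
    have e2 : ‖(g2 ζ)‖ = Real.exp ((L2 ζ).re) := by
      rw [← hL2 ζ hζ, Complex.norm_exp]
    have hφeq : φ ζ = ‖(g1 ζ)‖ * ‖(g2 ζ)‖ ^ γ := rfl
    rw [hφeq, e1, e2, ← Real.exp_mul, ← Real.exp_add]
    congr 1
    rw [hHdef]
    simp [Complex.add_re, Complex.mul_re]
    ring
  have hmemvert : ∀ ζ ∈ LHP, ∀ t : ℝ, ζ + (t : ℂ) * I ∈ LHP := by
    intro ζ hζ t
    simp only [hLHP, Set.mem_setOf_eq] at hζ ⊢
    simpa using hζ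
  have hHvert : ∀ ζ ∈ LHP, ∀ t : ℝ, (H (ζ + (t : ℂ) * I)).re = (H ζ).re := by
    intro ζ hζ t
    have h1 : ζ + (t : ℂ) * I ∈ LHP := hmemvert ζ hζ t
    have e3 := h_vert ζ hζ t
    have e1 := hHre ζ hζ
    have e2 := hHre _ h1
    have : Real.exp ((H (ζ + (t : ℂ) * I)).re) = Real.exp ((H ζ).re) := by
      rw [e1, e2, e3]
    exact Real.exp_injective this
  have hkim : ∀ ζ ∈ LHP, (k ζ).im = 0 := by
    intro ζ hζ
    have hdir := re_dir_deriv_eq_zero (hHd ζ hζ) I ?_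
    · have : -(k ζ).im = 0 := by simpa [Complex.mul_re] using hdir
      linarith
    · apply Filter.Eventually.of_forall
      intro t
      have heq : ζ + t • I = ζ + (t : ℂ) * I := by rw [Complex.real_smul]
      rw [heq, hHvert ζ hζ t]
  have hkdiff : DifferentiableOn ℂ k LHP := by
    have h1 : DifferentiableOn ℂ (deriv g1) LHP :=
      (hg1diff.analyticOnNhd hLo).deriv.differentiableOn
    have h2 : DifferentiableOn ℂ (deriv g2) LHP :=
      (hg2diff.analyticOnNhd hLo).deriv.differentiableOn
    exact (h1.div hg1diff hg10).add ((h2.div hg2diff hg20).const_mul _)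
  have hk0 : ∀ ζ ∈ LHP, HasDerivAt k 0 ζ := by
    intro ζ hζ
    have hkat : HasDerivAt k (deriv k ζ) ζ :=
      (hkdiff.differentiableAt (hLo.mem_nhds hζ)).hasDerivAt
    have hevents : ∀ d : ℂ, ∀ᶠ t : ℝ in nhds 0,
        ((fun w => I * k w) (ζ + t • d)).re = ((fun w => I * k w) ζ).re := by
      intro d
      have hcontline : Continuous (fun t : ℝ => ζ + t • d) :=
        continuous_const.add (continuous_id.smul continuous_const)
      have htend : Filter.Tendsto (fun t : ℝ => ζ + t • d) (nhds 0) (nhds ζ) := by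
        have := hcontline.tendsto 0
        simpa using this
      filter_upwards [htend.eventually (hLo.eventually_mem hζ)] with t ht
      show (I * k (ζ + t • d)).re = (I * k ζ).re
      have e1 : (k (ζ + t • d)).im = 0 := hkim _ ht
      have e2 : (k ζ).im = 0 := hkim ζ hζ
      have e1' : (k (ζ + (t : ℂ) * d)).im = 0 := by rwa [Complex.real_smul] at e1
      simp [Complex.mul_re, e1, e1', e2]
    have h1 := re_dir_deriv_eq_zero (hkat.const_mul I) 1 (hevents 1)
    have h2 := re_dir_deriv_eq_zero (hkat.const_mul I) I (hevents I)
    have him : (deriv k ζ).im = 0 := by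
      have : -(deriv k ζ).im = 0 := by simpa [Complex.mul_re] using h1
      linarith
    have hre' : (deriv k ζ).re = 0 := by
      have : -(deriv k ζ).re = 0 := by
        simpa [Complex.mul_re, Complex.mul_im] using h2
      linarith
    have hzero : deriv k ζ = 0 := Complex.ext hre' him
    rwa [hzero] at hkat
  set lam : ℝ := (k (-1)).re with hlamdef
  have hfderiv0 : ∀ {f : ℂ → ℂ}, (∀ x ∈ LHP, HasDerivAt f 0 x) → ∀ x ∈ LHP,
      fderivWithin ℂ f LHP x = 0 := by
    intro f hf x hx
    have h00 : (ContinuousLinearMap.toSpanSingleton ℂ (0 : ℂ)) = 0 := by ext w; simp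
    have := (hf x hx).hasFDerivAt
    rw [h00] at this
    exact this.hasFDerivWithinAt.fderivWithin (hLo.uniqueDiffOn x hx)
  have hklam : ∀ ζ ∈ LHP, k ζ = (lam : ℂ) := by
    intro ζ hζ
    have hconst := hLconv.is_const_of_fderivWithin_eq_zero hkdiff (hfderiv0 hk0) hζ hneg1
    rw [hconst]
    refine Complex.ext ?_ ?_
    · simp [hlamdef]
    · simpa using hkim _ hneg1
  set cc : ℂ := H (-1) + (lam : ℂ) with hccdef
  have hHaff : ∀ ζ ∈ LHP, H ζ = (lam : ℂ) * ζ + cc := by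
    intro ζ hζ
    set M : ℂ → ℂ := fun w => H w - (lam : ℂ) * w with hMdef
    have hMd : ∀ x ∈ LHP, HasDerivAt M 0 x := by
      intro x hx
      have := (hHd x hx).sub ((hasDerivAt_id x).const_mul (lam : ℂ))
      rw [hklam x hx] at this
      simp at this
      exact this
    have hMdiff : DifferentiableOn ℂ M LHP := fun x hx =>
      (hMd x hx).differentiableAt.differentiableWithinAt
    have hconst := hLconv.is_const_of_fderivWithin_eq_zero hMdiff (hfderiv0 hMd) hζ hneg1
    have hM1 : M (-1) = cc := by
      rw [hMdef, hccdef]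
      ring
    have : M ζ = cc := by rw [hconst, hM1]
    rw [hMdef] at this
    linear_combination this
  set b : ℝ := cc.re with hbdef
  have hφform : ∀ ζ ∈ LHP, φ ζ = Real.exp (lam * ζ.re + b) := by
    intro ζ hζ
    rw [← hHre ζ hζ, hHaff ζ hζ]
    congr 1
    simp [Complex.add_re, Complex.mul_re, hbdef]
  -- STEP 4 : conclusion
  have hφlt1 : ∀ ζ ∈ LHP, φ ζ < 1 := fun ζ hζ => ((hmem_iff _).mp (hFm (hφmem ζ hζ))).1
  have hlin : ∀ x : ℝ, x < 0 → lam * x + b < 0 := by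
    intro x hx
    have hmem : ((x : ℂ)) ∈ LHP := by simpa [hLHP] using hx
    have hlt := hφlt1 _ hmem
    rw [hφform _ hmem] at hlt
    have := Real.exp_lt_one_iff.mp hlt
    simpa using this
  have hlam0 : 0 ≤ lam := by
    by_contra hneg
    push_neg at hneg
    set x : ℝ := min (-1) (-b / lam) with hxdef
    have hx0 : x < 0 := lt_of_le_of_lt (min_le_left _ _) (by norm_num)
    have h1 := hlin x hx0
    have h2 : -b ≤ lam * x := by
      have hle : x ≤ -b / lam := min_le_right _ _
      have := mul_le_mul_of_nonpos_left hle hneg.le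
      rwa [mul_div_cancel₀ (-b) (ne_of_lt hneg)] at this
    linarith
  have hα0 : lam = 0 → b < 0 := by
    intro h
    have := hlin (-1) (by norm_num)
    rw [h] at this
    linarith
  have hb0 : b ≤ 0 := by
    rcases eq_or_lt_of_le hlam0 with h | h
    · exact (hα0 h.symm).le
    · by_contra hbpos
      push_neg at hbpos
      have hx0 : -b / (2 * lam) < 0 := by
        apply div_neg_of_neg_of_pos <;> linarith
      have h1 := hlin _ hx0
      have h2 : lam * (-b / (2 * lam)) = -b / 2 := by
        field_simp
      rw [h2] at h1
      linarith
  refine ⟨lam, Real.exp b, hlam0, Real.exp_pos b, ?_, ?_, ?_⟩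
  · rw [show (1 : ℝ) = Real.exp 0 by rw [Real.exp_zero]]
    exact Real.exp_le_exp.mpr hb0
  · intro h
    exact Real.exp_lt_one_iff.mpr (hα0 h)
  · intro z hz
    obtain ⟨h0, h1, h2⟩ := (hmem_iff z).mp hz
    have hplog : (Complex.log z.1 + (γ : ℂ) * Complex.log z.2).re = Real.log (p z) := by
      have : Real.log (p z) = Real.log (‖z.1‖) + γ * Real.log (‖z.2‖) := by
        rw [hpdef]
        rw [Real.log_mul (ne_of_gt ((norm_pos_iff.mpr h1)))
          (ne_of_gt (Real.rpow_pos_of_pos ((norm_pos_iff.mpr h2)) γ)),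
          Real.log_rpow ((norm_pos_iff.mpr h2))]
      rw [this]
      simp [Complex.add_re, Complex.mul_re, Complex.log_re]
    have hre2 : (Complex.log z.1 + (γ : ℂ) * Complex.log z.2).re < 0 := by
      rw [hplog]
      exact Real.log_neg (hppos z hz) h0
    have hmemL : Complex.log z.1 + (γ : ℂ) * Complex.log z.2 ∈ LHP := hre2
    have hd := h_desc z hz
    show p (F z) = Real.exp b * (p z) ^ lam
    rw [hd, hφform _ hmemL, hplog, Real.rpow_def_of_pos (hppos z hz), ← Real.exp_add]
    congr 1
    ring
end
end

section
/- Let γ > 0 be irrational and let F = (F₁, F₂) : D_γ* → D_γ* be holomorphic. Suppose α ≥ 0 and β > 0 satisfy |F₁(z)||F₂(z)|^γ = β·(|z₁||z₂|^γ)^α for all z ∈ D_γ*. Then there exist integers k₁, l₁, k₂, l₂ such that αγ = k₁ + γl₁ and α = k₂ + γl₂; in particular both α and αγ lie in ℤ + γℤ. -/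
open Complex Set
open Real

noncomputable section

lemma hasDerivAt_log_abs {φ : ℝ → ℂ} {v : ℂ} {t : ℝ} (hφ : HasDerivAt φ v t)
    (h0 : φ t ≠ 0) :
    HasDerivAt (fun s => Real.log (‖φ s‖)) ((v / φ t).re) t := by
  have hre : HasDerivAt (fun s => (φ s).re) v.re t :=
    Complex.reCLM.hasFDerivAt.comp_hasDerivAt t hφ
  have him : HasDerivAt (fun s => (φ s).im) v.im t :=
    Complex.imCLM.hasFDerivAt.comp_hasDerivAt t hφ
  have hN : HasDerivAt (fun s => Complex.normSq (φ s))
      (2 * ((φ t).re * v.re) + 2 * ((φ t).im * v.im)) t := by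
    have h := (hre.mul hre).add (him.mul him)
    simp only [Complex.normSq_apply]
    exact h.congr_deriv (by ring)
  have hN0 : Complex.normSq (φ t) ≠ 0 := by
    simpa [Complex.normSq_eq_zero] using h0
  have hL : HasDerivAt (fun s => Real.log (Complex.normSq (φ s)))
      ((Complex.normSq (φ t))⁻¹ * (2 * ((φ t).re * v.re) + 2 * ((φ t).im * v.im))) t :=
    by simpa [div_eq_inv_mul] using hN.log hN0
  have heqfun : (fun s => Real.log (‖φ s‖))
      = fun s => Real.log (Complex.normSq (φ s)) / 2 := by
    funext s
    rw [Complex.norm_def, Real.log_sqrt (Complex.normSq_nonneg _)]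
  rw [heqfun]
  refine (hL.div_const 2).congr_deriv ?_
  rw [Complex.div_re]
  have : Complex.normSq (φ t) ≠ 0 := hN0
  field_simp

lemma path_deriv_log_abs {U : Set ℂ} (hU : IsOpen U) {f : ℂ → ℂ}
    (hf : DifferentiableOn ℂ f U) {z₀ : ℂ} (hz₀ : z₀ ∈ U) (hfz : f z₀ ≠ 0)
    {w : ℝ → ℂ} {w' : ℂ} (hw : HasDerivAt w w' 0) (hw0 : w 0 = z₀) :
    HasDerivAt (fun t => Real.log (‖f (w t)‖))
      ((w' * deriv f z₀ / f z₀).re) 0 := by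
  have hfd : HasDerivAt f (deriv f z₀) z₀ :=
    (hf.differentiableAt (hU.mem_nhds hz₀)).hasDerivAt
  have hφ : HasDerivAt (fun t => f (w t)) (w' • deriv f z₀) 0 :=
    HasDerivAt.scomp_of_eq 0 hfd hw hw0.symm
  have h0 : f (w 0) ≠ 0 := by rw [hw0]; exact hfz
  have := hasDerivAt_log_abs hφ h0
  rw [hw0] at this
  simpa [smul_eq_mul, mul_div_assoc] using this

lemma key_pointwise {U : Set ℂ} (hU : IsOpen U) {f g : ℂ → ℂ}
    (hf : DifferentiableOn ℂ f U) (hg : DifferentiableOn ℂ g U)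
    (hf0 : ∀ z ∈ U, f z ≠ 0) (hg0 : ∀ z ∈ U, g z ≠ 0)
    {γ C a : ℝ} (hC : 0 < C)
    (hmod : ∀ z ∈ U, ‖f z‖ * ‖g z‖ ^ γ = C * ‖z‖ ^ a)
    {z₀ : ℂ} (hz₀ : z₀ ∈ U) (hz0 : z₀ ≠ 0) :
    deriv f z₀ / f z₀ + (γ : ℂ) * (deriv g z₀ / g z₀) = (a : ℂ) / z₀ := by
  have habs0 : 0 < ‖z₀‖ := norm_pos_iff.mpr hz0
  -- the local identity for real logs
  have hlog : ∀ z ∈ U, z ≠ 0 →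
      Real.log (‖f z‖) + γ * Real.log (‖g z‖)
        = Real.log C + a * Real.log (‖z‖) := by
    intro z hz hz0'
    have h1 : (0:ℝ) < ‖f z‖ := norm_pos_iff.mpr (hf0 z hz)
    have h2 : (0:ℝ) < ‖g z‖ := norm_pos_iff.mpr (hg0 z hz)
    have h3 : (0:ℝ) < ‖z‖ := norm_pos_iff.mpr hz0'
    have := hmod z hz
    have hL := congrArg Real.log this
    rwa [Real.log_mul (ne_of_gt h1) (ne_of_gt (Real.rpow_pos_of_pos h2 γ)),
      Real.log_rpow h2, Real.log_mul (ne_of_gt hC) (ne_of_gt (Real.rpow_pos_of_pos h3 a)),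
      Real.log_rpow h3] at hL
  -- generic path computation
  have main : ∀ w' : ℂ, ∀ w : ℝ → ℂ, HasDerivAt w w' 0 → w 0 = z₀ →
      ∀ R : ℝ → ℝ, ∀ R' : ℝ, HasDerivAt R R' 0 →
      (∀ᶠ t in nhds (0:ℝ), Real.log (‖w t‖) = R t) →
      (w' * deriv f z₀ / f z₀).re + γ * (w' * deriv g z₀ / g z₀).re
        = a * R' := by
    intro w' w hw hw0 R R' hR hev
    have hcw : ContinuousAt w 0 := hw.continuousAt
    have hWU : ∀ᶠ t in nhds (0:ℝ), w t ∈ U := by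
      have : U ∈ nhds (w 0) := hU.mem_nhds (hw0 ▸ hz₀)
      exact hcw this
    have hWne : ∀ᶠ t in nhds (0:ℝ), w t ≠ 0 := by
      have : {(0:ℂ)}ᶜ ∈ nhds (w 0) := by
        refine IsOpen.mem_nhds isOpen_compl_singleton ?_
        simp [hw0, hz0]
      exact hcw this
    have hL : HasDerivAt (fun t => Real.log (‖f (w t)‖)
        + γ * Real.log (‖g (w t)‖))
        ((w' * deriv f z₀ / f z₀).re + γ * (w' * deriv g z₀ / g z₀).re) 0 :=
      (path_deriv_log_abs hU hf hz₀ (hf0 _ hz₀) hw hw0).add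
        ((path_deriv_log_abs hU hg hz₀ (hg0 _ hz₀) hw hw0).const_mul γ)
    have hR2 : HasDerivAt (fun t => Real.log C + a * R t) (a * R') 0 :=
      (hR.const_mul a).const_add _
    have hee : (fun t => Real.log (‖f (w t)‖)
        + γ * Real.log (‖g (w t)‖)) =ᶠ[nhds (0:ℝ)]
        fun t => Real.log C + a * R t := by
      filter_upwards [hWU, hWne, hev] with t h1 h2 h3
      rw [hlog _ h1 h2, h3]
    exact (((Filter.EventuallyEq.hasDerivAt_iff hee).mp hL)).unique hR2
  -- path 1 : w t = (1 + t) * z₀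
  have hw1 : HasDerivAt (fun t : ℝ => (1 + (t:ℂ)) * z₀) z₀ 0 := by
    have h1 : HasDerivAt (fun t : ℝ => (t:ℂ)) 1 0 :=
      Complex.ofRealCLM.hasDerivAt
    simpa using (h1.const_add (1:ℂ)).mul_const z₀
  have hR1 : HasDerivAt (fun t : ℝ => Real.log (1 + t) + Real.log (‖z₀‖)) 1 0 := by
    have h1 : HasDerivAt (fun t : ℝ => 1 + t) 1 0 := by
      simpa using (hasDerivAt_id (0:ℝ)).const_add (1:ℝ)
    have := (Real.hasDerivAt_log (by norm_num : (1:ℝ) + 0 ≠ 0)).comp 0 h1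
    simpa using this.add_const (Real.log ‖z₀‖)
  have hev1 : ∀ᶠ (t:ℝ) in nhds (0:ℝ),
      Real.log (‖(1 + (t:ℂ)) * z₀‖) = Real.log (1 + t) + Real.log (‖z₀‖) := by
    filter_upwards [eventually_gt_nhds (by norm_num : (-1:ℝ) < 0)] with t ht
    have h1t : (0:ℝ) < 1 + t := by linarith
    have : ‖(1 + (t:ℂ)) * z₀‖ = (1 + t) * ‖z₀‖ := by
      rw [norm_mul]
      congr 1
      rw [show (1 + (t:ℂ)) = ((1 + t : ℝ) : ℂ) by push_cast; ring, Complex.norm_real, Real.norm_eq_abs,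
        abs_of_pos h1t]
    rw [this, Real.log_mul (ne_of_gt h1t) (ne_of_gt habs0)]
  have e1 := main z₀ _ hw1 (by simp) _ 1 hR1 hev1
  -- path 2 : w t = (1 + t*I) * z₀
  have hw2 : HasDerivAt (fun t : ℝ => (1 + (t:ℂ) * I) * z₀) (I * z₀) 0 := by
    have h1 : HasDerivAt (fun t : ℝ => (t:ℂ)) 1 0 := Complex.ofRealCLM.hasDerivAt
    simpa using ((h1.mul_const I).const_add (1:ℂ)).mul_const z₀
  have hR2' : HasDerivAt (fun t : ℝ => Real.log (1 + t^2) / 2 + Real.log (‖z₀‖)) 0 0 := by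
    have h1 : HasDerivAt (fun t : ℝ => 1 + t^2) 0 0 := by
      simpa using ((hasDerivAt_pow 2 (0:ℝ)).const_add (1:ℝ))
    have := (Real.hasDerivAt_log (by norm_num : (1:ℝ) + 0^2 ≠ 0)).comp 0 h1
    simpa using (this.div_const 2).add_const (Real.log ‖z₀‖)
  have hev2 : ∀ᶠ (t:ℝ) in nhds (0:ℝ),
      Real.log (‖(1 + (t:ℂ) * I) * z₀‖)
        = Real.log (1 + t^2) / 2 + Real.log (‖z₀‖) := by
    filter_upwards with t
    have h1t : (0:ℝ) < 1 + t^2 := by positivity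
    have habs : ‖1 + (t:ℂ) * I‖ = Real.sqrt (1 + t^2) := by
      rw [Complex.norm_def]
      congr 1
      simp [Complex.normSq_apply]
      ring
    rw [norm_mul, habs, Real.log_mul (by positivity) (ne_of_gt habs0),
      Real.log_sqrt (le_of_lt h1t)]
  have e2 := main (I * z₀) _ hw2 (by simp) _ 0 hR2' hev2
  rw [mul_zero] at e2
  rw [mul_one] at e1
  -- assemble
  set Qf := z₀ * deriv f z₀ / f z₀ with hQf
  set Qg := z₀ * deriv g z₀ / g z₀ with hQg
  have e1' : Qf.re + γ * Qg.re = a := e1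
  have hIf : I * Qf = I * z₀ * deriv f z₀ / f z₀ := by rw [hQf]; ring
  have hIg : I * Qg = I * z₀ * deriv g z₀ / g z₀ := by rw [hQg]; ring
  have e2' : (I * Qf).re + γ * (I * Qg).re = 0 := by rw [hIf, hIg]; exact e2
  have hQ : Qf + (γ:ℂ) * Qg = (a:ℂ) := by
    apply Complex.ext
    · simpa [Complex.add_re, Complex.ofReal_re] using e1'
    · have : Qf.im + γ * Qg.im = 0 := by
        have h := e2'
        simp only [Complex.mul_re, Complex.I_re, Complex.I_im] at h
        linarith
      simpa [Complex.add_im, Complex.ofReal_im] using this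
  have : z₀ * (deriv f z₀ / f z₀ + (γ:ℂ) * (deriv g z₀ / g z₀)) = (a:ℂ) := by
    rw [← hQ, hQf, hQg]; ring
  field_simp [hz0] at this ⊢
  linear_combination this

lemma contSlice {U : Set ℂ} (hU : IsOpen U) {f : ℂ → ℂ} (hf : DifferentiableOn ℂ f U)
    (hf0 : ∀ z ∈ U, f z ≠ 0) {r : ℝ} (hr : 0 < r) (hsub : Metric.sphere (0:ℂ) r ⊆ U) :
    Continuous (fun t : ℝ => circleMap 0 r t * I *
      (deriv f (circleMap 0 r t) / f (circleMap 0 r t))) := by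
  have hmem : ∀ t : ℝ, circleMap 0 r t ∈ U := fun t =>
    hsub (circleMap_mem_sphere 0 hr.le t)
  have han : AnalyticOnNhd ℂ f U := hf.analyticOnNhd hU
  have hdc : Continuous (fun t : ℝ => deriv f (circleMap 0 r t)) :=
    (han.deriv.continuousOn).comp_continuous (continuous_circleMap 0 r) hmem
  have hfc : Continuous (fun t : ℝ => f (circleMap 0 r t)) :=
    (hf.continuousOn).comp_continuous (continuous_circleMap 0 r) hmem
  exact ((continuous_circleMap 0 r).mul continuous_const).mul
    (hdc.div hfc (fun t => hf0 _ (hmem t)))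

lemma winding {U : Set ℂ} (hU : IsOpen U) {f : ℂ → ℂ} (hf : DifferentiableOn ℂ f U)
    (hf0 : ∀ z ∈ U, f z ≠ 0) {r : ℝ} (hr : 0 < r) (hsub : Metric.sphere (0:ℂ) r ⊆ U) :
    ∃ n : ℤ, (∫ t in (0:ℝ)..(2*π), circleMap 0 r t * I *
      (deriv f (circleMap 0 r t) / f (circleMap 0 r t))) = n * (2*π*I) := by
  have hmem : ∀ t : ℝ, circleMap 0 r t ∈ U := fun t =>
    hsub (circleMap_mem_sphere 0 hr.le t)
  set c := circleMap 0 r with hc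
  set Ff : ℝ → ℂ := fun t => c t * I * (deriv f (c t) / f (c t)) with hFf
  have hcont : Continuous Ff := contSlice hU hf hf0 hr hsub
  set A : ℝ → ℂ := fun θ => ∫ t in (0:ℝ)..θ, Ff t with hA
  have hA' : ∀ θ, HasDerivAt A (Ff θ) θ := fun θ =>
    (hcont.integral_hasStrictDerivAt 0 θ).hasDerivAt
  set E : ℝ → ℂ := fun θ => f (c θ) * Complex.exp (-A θ) with hE
  have hEd : ∀ θ, HasDerivAt E 0 θ := by
    intro θ
    have hfd : HasDerivAt f (deriv f (c θ)) (c θ) :=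
      (hf.differentiableAt (hU.mem_nhds (hmem θ))).hasDerivAt
    have hcd : HasDerivAt c (c θ * I) θ := by
      simpa [hc] using hasDerivAt_circleMap 0 r θ
    have h1 : HasDerivAt (fun θ => f (c θ)) ((c θ * I) • deriv f (c θ)) θ :=
      HasDerivAt.scomp θ hfd hcd
    have h2 : HasDerivAt (fun θ => Complex.exp (-A θ))
        (Complex.exp (-A θ) * (-Ff θ)) θ := ((hA' θ).neg).cexp
    have h3 := h1.mul h2
    refine h3.congr_deriv ?_
    have hfne : f (c θ) ≠ 0 := hf0 _ (hmem θ)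
    simp only [smul_eq_mul, hFf]
    field_simp
    ring
  have hconst : E (2*π) = E 0 :=
    is_const_of_deriv_eq_zero (fun θ => (hEd θ).differentiableAt)
      (fun θ => (hEd θ).deriv) _ _
  have hc2π : c (2*π) = c 0 := by
    simpa using (periodic_circleMap 0 r) 0
  have hA0 : A 0 = 0 := intervalIntegral.integral_same
  have hfne : f (c 0) ≠ 0 := hf0 _ (hmem 0)
  have hexp : Complex.exp (-A (2*π)) = 1 := by
    have h := hconst
    rw [hE] at h
    simp only [hc2π, hA0, neg_zero, Complex.exp_zero, mul_one] at h
    exact mul_left_cancel₀ hfne (by simpa using h)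
  have hexp1 : Complex.exp (A (2*π)) = 1 := by
    rw [Complex.exp_neg] at hexp
    exact inv_eq_one.mp hexp
  obtain ⟨n, hn⟩ := Complex.exp_eq_one_iff.mp hexp1
  exact ⟨n, hn⟩

lemma slice_int {U : Set ℂ} (hU : IsOpen U) (hUz : ∀ z ∈ U, z ≠ 0) {f g : ℂ → ℂ}
    (hf : DifferentiableOn ℂ f U) (hg : DifferentiableOn ℂ g U)
    (hf0 : ∀ z ∈ U, f z ≠ 0) (hg0 : ∀ z ∈ U, g z ≠ 0)
    {γ C a r : ℝ} (hC : 0 < C) (hr : 0 < r) (hsub : Metric.sphere (0:ℂ) r ⊆ U)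
    (hmod : ∀ z ∈ U, ‖f z‖ * ‖g z‖ ^ γ = C * ‖z‖ ^ a) :
    ∃ k l : ℤ, a = (k : ℝ) + γ * (l : ℝ) := by
  obtain ⟨n, hn⟩ := winding hU hf hf0 hr hsub
  obtain ⟨m, hm⟩ := winding hU hg hg0 hr hsub
  refine ⟨n, m, ?_⟩
  have hmem : ∀ t : ℝ, circleMap 0 r t ∈ U := fun t =>
    hsub (circleMap_mem_sphere 0 hr.le t)
  have hpt : ∀ t : ℝ,
      circleMap 0 r t * I * (deriv f (circleMap 0 r t) / f (circleMap 0 r t))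
      + (γ:ℂ) * (circleMap 0 r t * I * (deriv g (circleMap 0 r t) / g (circleMap 0 r t)))
      = (a:ℂ) * I := by
    intro t
    have hz := hUz _ (hmem t)
    have hk := key_pointwise hU hf hg hf0 hg0 hC hmod (hmem t) hz
    have : circleMap 0 r t * I *
        (deriv f (circleMap 0 r t) / f (circleMap 0 r t)
          + (γ:ℂ) * (deriv g (circleMap 0 r t) / g (circleMap 0 r t)))
        = circleMap 0 r t * I * ((a:ℂ) / circleMap 0 r t) := by rw [hk]
    calc circleMap 0 r t * I * (deriv f (circleMap 0 r t) / f (circleMap 0 r t))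
          + (γ:ℂ) * (circleMap 0 r t * I * (deriv g (circleMap 0 r t) / g (circleMap 0 r t)))
        = circleMap 0 r t * I *
          (deriv f (circleMap 0 r t) / f (circleMap 0 r t)
            + (γ:ℂ) * (deriv g (circleMap 0 r t) / g (circleMap 0 r t))) := by ring
      _ = circleMap 0 r t * I * ((a:ℂ) / circleMap 0 r t) := this
      _ = (a:ℂ) * I := by field_simp
  have hif : IntervalIntegrable (fun t : ℝ => circleMap 0 r t * I *
      (deriv f (circleMap 0 r t) / f (circleMap 0 r t))) MeasureTheory.volume 0 (2*π) :=
    (contSlice hU hf hf0 hr hsub).intervalIntegrable _ _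
  have hig : IntervalIntegrable (fun t : ℝ => (γ:ℂ) * (circleMap 0 r t * I *
      (deriv g (circleMap 0 r t) / g (circleMap 0 r t)))) MeasureTheory.volume 0 (2*π) :=
    (continuous_const.mul (contSlice hU hg hg0 hr hsub)).intervalIntegrable _ _
  have hsum : (∫ t in (0:ℝ)..(2*π), circleMap 0 r t * I *
        (deriv f (circleMap 0 r t) / f (circleMap 0 r t)))
      + (γ:ℂ) * (∫ t in (0:ℝ)..(2*π), circleMap 0 r t * I *
        (deriv g (circleMap 0 r t) / g (circleMap 0 r t)))
      = ∫ t in (0:ℝ)..(2*π), (a:ℂ) * I := by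
    rw [← intervalIntegral.integral_const_mul, ← intervalIntegral.integral_add hif hig]
    exact intervalIntegral.integral_congr fun t _ => hpt t
  rw [hn, hm, intervalIntegral.integral_const] at hsum
  have h2πI : (2*(π:ℂ)*I : ℂ) ≠ 0 := by
    simp [Real.pi_ne_zero, Complex.I_ne_zero, Complex.ofReal_ne_zero]
  have hcast : ((n:ℂ) + (γ:ℂ) * (m:ℂ)) * (2*(π:ℂ)*I) = (a:ℂ) * (2*(π:ℂ)*I) := by
    have hsm : ((2*π - 0 : ℝ)) • ((a:ℂ) * I) = (a:ℂ) * (2*(π:ℂ)*I) := by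
      rw [sub_zero, real_smul]
      push_cast
      ring
    rw [hsm] at hsum
    linear_combination hsum
  have hfin : ((n:ℂ) + (γ:ℂ) * (m:ℂ)) = (a:ℂ) := mul_right_cancel₀ h2πI hcast
  have : (((n:ℝ) + γ * (m:ℝ) : ℝ) : ℂ) = ((a:ℝ) : ℂ) := by
    push_cast
    exact hfin
  exact (Complex.ofReal_inj.mp this).symm

/-- if a holomorphic self-map `F` of `D_γ*` satisfies
`|F₁(z)||F₂(z)|^γ = β (|z₁||z₂|^γ)^α`, then both `αγ` and `α` lie in `ℤ + γℤ`. -/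
theorem stmt13 (γ : ℝ) (hγpos : 0 < γ) (hγ : Irrational γ)
    (F : ℂ × ℂ → ℂ × ℂ)
    (hF : DifferentiableOn ℂ F (Dgs γ)) (hFm : Set.MapsTo F (Dgs γ) (Dgs γ))
    (α β : ℝ) (hα : 0 ≤ α) (hβ : 0 < β)
    (heq : ∀ z ∈ Dgs γ,
      ‖(F z).1‖ * ‖(F z).2‖ ^ γ =
        β * (‖z.1‖ * ‖z.2‖ ^ γ) ^ α) :
    ∃ k₁ l₁ k₂ l₂ : ℤ,
      α * γ = (k₁ : ℝ) + γ * (l₁ : ℝ) ∧ α = (k₂ : ℝ) + γ * (l₂ : ℝ) := by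
  have habs2 : ‖(2:ℂ)⁻¹‖ = (2:ℝ)⁻¹ := by
    rw [norm_inv, Complex.norm_two]
  have h2ne : ((2:ℂ)⁻¹ : ℂ) ≠ 0 := by norm_num
  have hhalfpow : (0:ℝ) < (2:ℝ)⁻¹ ^ γ := Real.rpow_pos_of_pos (by norm_num) γ
  have hhalfle : (2:ℝ)⁻¹ ^ γ ≤ 1 :=
    Real.rpow_le_one (by norm_num) (by norm_num) hγpos.le
  -- ############ Slice A : fix z₂ = 1/2, vary z₁ ############
  have sliceA : ∃ k l : ℤ, α = (k : ℝ) + γ * (l : ℝ) := by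
    set U : Set ℂ := {z : ℂ | z ≠ 0 ∧ ‖z‖ * (2:ℝ)⁻¹ ^ γ < 1} with hUdef
    have hU : IsOpen U := by
      have h1 : IsOpen {z : ℂ | z ≠ 0} := isOpen_ne
      have h2 : IsOpen {z : ℂ | ‖z‖ * (2:ℝ)⁻¹ ^ γ < 1} :=
        isOpen_lt (continuous_norm.mul continuous_const) continuous_const
      exact h1.inter h2
    have hUz : ∀ z ∈ U, z ≠ 0 := fun z hz => hz.1
    have hmaps : ∀ z ∈ U, (z, ((2:ℂ)⁻¹)) ∈ Dgs γ := by
      intro z hz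
      refine ⟨?_, hz.1, h2ne⟩
      show ‖z‖ * ‖(2:ℂ)⁻¹‖ ^ γ < 1
      rw [habs2]
      exact hz.2
    have hdiff : DifferentiableOn ℂ (fun z : ℂ => F (z, ((2:ℂ)⁻¹))) U := by
      apply hF.comp (DifferentiableOn.prodMk differentiableOn_id (differentiableOn_const _))
      exact fun z hz => hmaps z hz
    have hf : DifferentiableOn ℂ (fun z : ℂ => (F (z, ((2:ℂ)⁻¹))).1) U := hdiff.fst
    have hg : DifferentiableOn ℂ (fun z : ℂ => (F (z, ((2:ℂ)⁻¹))).2) U := hdiff.snd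
    have hf0 : ∀ z ∈ U, (F (z, ((2:ℂ)⁻¹))).1 ≠ 0 := fun z hz => (hFm (hmaps z hz)).2.1
    have hg0 : ∀ z ∈ U, (F (z, ((2:ℂ)⁻¹))).2 ≠ 0 := fun z hz => (hFm (hmaps z hz)).2.2
    have hC : (0:ℝ) < β * ((2:ℝ)⁻¹ ^ γ) ^ α := by positivity
    have hsub : Metric.sphere (0:ℂ) (2:ℝ)⁻¹ ⊆ U := by
      intro z hz
      rw [mem_sphere_zero_iff_norm] at hz
      have hzabs : ‖z‖ = (2:ℝ)⁻¹ := hz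
      constructor
      · intro h; rw [h] at hzabs; simp at hzabs
      · rw [hzabs]
        calc (2:ℝ)⁻¹ * (2:ℝ)⁻¹ ^ γ ≤ (2:ℝ)⁻¹ * 1 := by nlinarith
          _ < 1 := by norm_num
    have hmod : ∀ z ∈ U, ‖(F (z, ((2:ℂ)⁻¹))).1‖
        * ‖(F (z, ((2:ℂ)⁻¹))).2‖ ^ γ
        = (β * ((2:ℝ)⁻¹ ^ γ) ^ α) * ‖z‖ ^ α := by
      intro z hz
      have h := heq _ (hmaps z hz)
      simp only at h
      rw [habs2] at h
      rw [h, Real.mul_rpow (norm_nonneg z) hhalfpow.le]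
      ring
    exact slice_int hU hUz hf hg hf0 hg0 hC (by norm_num : (0:ℝ) < (2:ℝ)⁻¹) hsub hmod
  -- ############ Slice B : fix z₁ = 1/2, vary z₂ ############
  have sliceB : ∃ k l : ℤ, γ * α = (k : ℝ) + γ * (l : ℝ) := by
    set U : Set ℂ := {z : ℂ | z ≠ 0 ∧ ‖z‖ ^ γ < 2} with hUdef
    have hU : IsOpen U := by
      have h1 : IsOpen {z : ℂ | z ≠ 0} := isOpen_ne
      have h2 : IsOpen {z : ℂ | ‖z‖ ^ γ < 2} :=
        isOpen_lt (continuous_norm.rpow_const (fun x => Or.inr hγpos.le))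
          continuous_const
      exact h1.inter h2
    have hUz : ∀ z ∈ U, z ≠ 0 := fun z hz => hz.1
    have hmaps : ∀ z ∈ U, (((2:ℂ)⁻¹), z) ∈ Dgs γ := by
      intro z hz
      refine ⟨?_, h2ne, hz.1⟩
      show ‖(2:ℂ)⁻¹‖ * ‖z‖ ^ γ < 1
      rw [habs2]
      have := hz.2
      linarith
    have hdiff : DifferentiableOn ℂ (fun z : ℂ => F (((2:ℂ)⁻¹), z)) U := by
      apply hF.comp (DifferentiableOn.prodMk (differentiableOn_const _) differentiableOn_id)
      exact fun z hz => hmaps z hz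
    have hf : DifferentiableOn ℂ (fun z : ℂ => (F (((2:ℂ)⁻¹), z)).1) U := hdiff.fst
    have hg : DifferentiableOn ℂ (fun z : ℂ => (F (((2:ℂ)⁻¹), z)).2) U := hdiff.snd
    have hf0 : ∀ z ∈ U, (F (((2:ℂ)⁻¹), z)).1 ≠ 0 := fun z hz => (hFm (hmaps z hz)).2.1
    have hg0 : ∀ z ∈ U, (F (((2:ℂ)⁻¹), z)).2 ≠ 0 := fun z hz => (hFm (hmaps z hz)).2.2
    have hC : (0:ℝ) < β * (2:ℝ)⁻¹ ^ α := by positivity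
    have hsub : Metric.sphere (0:ℂ) (1:ℝ) ⊆ U := by
      intro z hz
      rw [mem_sphere_zero_iff_norm] at hz
      have hzabs : ‖z‖ = 1 := hz
      constructor
      · intro h; rw [h] at hzabs; simp at hzabs
      · rw [hzabs, Real.one_rpow]; norm_num
    have hmod : ∀ z ∈ U, ‖(F (((2:ℂ)⁻¹), z)).1‖
        * ‖(F (((2:ℂ)⁻¹), z)).2‖ ^ γ
        = (β * (2:ℝ)⁻¹ ^ α) * ‖z‖ ^ (γ * α) := by
      intro z hz
      have h := heq _ (hmaps z hz)
      simp only at h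
      rw [habs2] at h
      rw [h, Real.mul_rpow (by norm_num : (0:ℝ) ≤ (2:ℝ)⁻¹)
        (Real.rpow_nonneg (norm_nonneg z) γ),
        Real.rpow_mul (norm_nonneg z)]
      ring
    exact slice_int hU hUz hf hg hf0 hg0 hC one_pos hsub hmod
  obtain ⟨k₁, l₁, h₁⟩ := sliceB
  obtain ⟨k₂, l₂, h₂⟩ := sliceA
  exact ⟨k₁, l₁, k₂, l₂, by rw [mul_comm]; exact h₁, h₂⟩
end
end

section
/- Let γ > 0 be irrational and let a₁, a₂ ∈ ℂ ∖ {0}, and set ρ := |a₁||a₂|^γ. Then the set {(a₁·exp(−γλ), a₂·exp(λ)) : λ ∈ ℂ} is dense in V_ρ(γ) := {z ∈ ℂ² : |z₁||z₂|^γ = ρ}. -/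
open Complex Set Filter

noncomputable section

theorem dense_aux (γ : ℝ) (hγ : Irrational γ) :
    Dense ((AddSubgroup.closure {γ, 1} : AddSubgroup ℝ) : Set ℝ) := by
  rcases AddSubgroup.dense_or_cyclic (AddSubgroup.closure {γ, (1:ℝ)}) with h | ⟨a, ha⟩
  · exact h
  · exfalso
    have hγm : γ ∈ AddSubgroup.closure ({γ, (1:ℝ)} : Set ℝ) :=
      AddSubgroup.subset_closure (by simp)
    have h1m : (1:ℝ) ∈ AddSubgroup.closure ({γ, (1:ℝ)} : Set ℝ) :=
      AddSubgroup.subset_closure (by simp)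
    rw [ha, AddSubgroup.mem_closure_singleton] at hγm h1m
    obtain ⟨m, hm⟩ := hγm
    obtain ⟨n, hn⟩ := h1m
    rw [zsmul_eq_mul] at hm hn
    have hn0 : (n:ℝ) ≠ 0 := by
      rintro h
      rw [h, zero_mul] at hn
      exact one_ne_zero hn.symm
    exact hγ ⟨(m : ℚ) / n, by
      push_cast
      field_simp
      rw [← hm, mul_left_comm, hn, mul_one]⟩

/-- for irrational `γ > 0` and `a₁, a₂ ∈ ℂ*`, the orbit
`{(a₁ e^{-γλ}, a₂ e^{λ}) : λ ∈ ℂ}` is dense in the level set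
`V_ρ(γ) = {z : |z₁||z₂|^γ = ρ}` with `ρ = |a₁||a₂|^γ`. -/
theorem stmt14 (γ : ℝ) (hγpos : 0 < γ) (hγ : Irrational γ)
    (a₁ a₂ : ℂ) (h₁ : a₁ ≠ 0) (h₂ : a₂ ≠ 0) :
    {z : ℂ × ℂ | ‖z.1‖ * ‖z.2‖ ^ γ =
        ‖a₁‖ * ‖a₂‖ ^ γ} ⊆
      closure {w : ℂ × ℂ | ∃ lam : ℂ,
        w = (a₁ * Complex.exp (-(γ : ℂ) * lam), a₂ * Complex.exp lam)} := by
  intro z hz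
  simp only [mem_setOf_eq] at hz
  have ha₁ : (0:ℝ) < ‖a₁‖ := norm_pos_iff.mpr h₁
  have ha₂ : (0:ℝ) < ‖a₂‖ := norm_pos_iff.mpr h₂
  have hρ : 0 < ‖a₁‖ * ‖a₂‖ ^ γ := by positivity
  have hzz : 0 < ‖z.1‖ * ‖z.2‖ ^ γ := hz ▸ hρ
  have hz1 : 0 < ‖z.1‖ := by
    rcases mul_pos_iff.mp hzz with ⟨h, _⟩ | ⟨h, _⟩
    · exact h
    · exact absurd h (not_lt.mpr (norm_nonneg z.1))
  have hz2 : 0 < ‖z.2‖ := by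
    rcases (norm_nonneg z.2).lt_or_eq with h | h
    · exact h
    · exfalso
      rw [← h, Real.zero_rpow (ne_of_gt hγpos), mul_zero] at hzz
      exact lt_irrefl 0 hzz
  set s : ℝ := Real.log (‖z.2‖ / ‖a₂‖) with hs
  have hes : Real.exp s = ‖z.2‖ / ‖a₂‖ := Real.exp_log (by positivity)
  have hns : Real.exp (-(γ * s)) = ‖z.1‖ / ‖a₁‖ := by
    have h1 : (‖z.2‖ / ‖a₂‖) ^ (-γ) = Real.exp (-(γ * s)) := by
      rw [Real.rpow_def_of_pos (by positivity), ← hs]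
      ring_nf
    rw [← h1, Real.rpow_neg (by positivity), ← Real.inv_rpow (by positivity), inv_div,
      Real.div_rpow ha₂.le hz2.le]
    rw [div_eq_div_iff (by positivity) (ne_of_gt ha₁)]
    linarith [hz]
  set β₂ : ℝ := z.2.arg - a₂.arg with hβ₂
  set θ : ℝ := z.1.arg - a₁.arg + γ * β₂ with hθ
  set u₀ : ℝ := -θ / (2 * Real.pi) with hu₀
  obtain ⟨g, hgS, hgtend⟩ := mem_closure_iff_seq_limit.mp ((dense_aux γ hγ) u₀)
  have hkm : ∀ n, ∃ k m : ℤ, (k : ℝ) * γ + (m : ℝ) = g n := by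
    intro n
    obtain ⟨k, m, hkm⟩ := (AddSubgroup.mem_closure_pair).mp (hgS n)
    exact ⟨k, m, by rw [← hkm]; push_cast [zsmul_eq_mul]; ring⟩
  choose kk mm hkm using hkm
  set lam : ℕ → ℂ := fun n => (s : ℂ) + ((β₂ + 2 * Real.pi * (kk n : ℝ) : ℝ) : ℂ) * I with hlam
  set F : ℕ → ℂ × ℂ := fun n =>
      (a₁ * Complex.exp (-(γ : ℂ) * lam n), a₂ * Complex.exp (lam n)) with hF
  have hmem : ∀ n, F n ∈ {w : ℂ × ℂ | ∃ lam : ℂ,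
      w = (a₁ * Complex.exp (-(γ : ℂ) * lam), a₂ * Complex.exp lam)} :=
    fun n => ⟨lam n, rfl⟩
  have htend : Tendsto F atTop (nhds z) := ?_
  · exact mem_closure_of_tendsto htend (Eventually.of_forall hmem)
  -- second coordinate is constantly z.2
  have hsecond : ∀ n, a₂ * Complex.exp (lam n) = z.2 := by
    intro n
    have harg : lam n = (s : ℂ) + (β₂ : ℝ) * I + (kk n : ℂ) * (2 * Real.pi * I) := by
      rw [hlam]; push_cast; ring
    rw [harg, Complex.exp_add, Complex.exp_add]
    rw [Complex.exp_int_mul_two_pi_mul_I, mul_one]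
    rw [← Complex.ofReal_exp, hes, hβ₂]
    rw [Complex.ofReal_sub, sub_mul, Complex.exp_sub]
    have hza : (‖a₂‖ : ℂ) * Complex.exp (I * a₂.arg) = a₂ := by
      rw [mul_comm I]; exact Complex.norm_mul_exp_arg_mul_I a₂
    have hzz2 := Complex.norm_mul_exp_arg_mul_I z.2
    have he2 : Complex.exp ((a₂.arg : ℂ) * I) ≠ 0 := Complex.exp_ne_zero _
    have hna : (‖a₂‖ : ℂ) ≠ 0 := by exact_mod_cast ha₂.ne'
    push_cast
    field_simp
    linear_combination (-(‖z.2‖ * Complex.exp (z.2.arg * I) : ℂ)) * hza + (‖a₂‖ * Complex.exp (I * a₂.arg) : ℂ) * hzz2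
  -- first coordinate
  set C : ℂ := a₁ * ((‖z.1‖ / ‖a₁‖ : ℝ) : ℂ) *
      Complex.exp ((-(γ * β₂) : ℝ) * I) with hC
  have hfirst : ∀ n, a₁ * Complex.exp (-(γ : ℂ) * lam n) =
      C * Complex.exp (((-(2 * Real.pi * g n) : ℝ) : ℂ) * I) := by
    intro n
    have harg : -(γ : ℂ) * lam n = ((-(γ * s) : ℝ) : ℂ) + ((-(γ * β₂) : ℝ) : ℂ) * I
        + ((-(2 * Real.pi * g n) : ℝ) : ℂ) * I + (mm n : ℂ) * (2 * Real.pi * I) := by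
      rw [hlam, ← hkm n]; push_cast; ring
    rw [harg, Complex.exp_add, Complex.exp_add, Complex.exp_add]
    rw [Complex.exp_int_mul_two_pi_mul_I, mul_one, ← Complex.ofReal_exp, hns, hC]
    ring
  have hClim : C * Complex.exp (((-(2 * Real.pi * u₀) : ℝ) : ℂ) * I) = z.1 := by
    have hπ : (2 * Real.pi) ≠ 0 := by positivity
    have h2 : -(2 * Real.pi * u₀) = θ := by
      rw [hu₀]; field_simp
    have hA : Complex.exp (((-(γ * β₂) : ℝ) : ℂ) * I) * Complex.exp ((θ : ℝ) * I)
        = Complex.exp (((z.1.arg - a₁.arg : ℝ) : ℂ) * I) := by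
      rw [← Complex.exp_add]
      congr 1
      rw [← add_mul, ← Complex.ofReal_add]
      congr 2
      rw [hθ]; ring
    rw [h2, hC, mul_assoc, hA]
    rw [Complex.ofReal_sub, sub_mul, Complex.exp_sub]
    have hza : (‖a₁‖ : ℂ) * Complex.exp (I * a₁.arg) = a₁ := by
      rw [mul_comm I]; exact Complex.norm_mul_exp_arg_mul_I a₁
    have hzz1 := Complex.norm_mul_exp_arg_mul_I z.1
    have he1 : Complex.exp ((a₁.arg : ℂ) * I) ≠ 0 := Complex.exp_ne_zero _
    have hna : (‖a₁‖ : ℂ) ≠ 0 := by exact_mod_cast ha₁.ne'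
    push_cast
    field_simp
    linear_combination (-(‖z.1‖ * Complex.exp (z.1.arg * I) : ℂ)) * hza + (‖a₁‖ * Complex.exp (I * a₁.arg) : ℂ) * hzz1
  have hcont : Continuous fun x : ℝ => C * Complex.exp (((-(2 * Real.pi * x) : ℝ) : ℂ) * I) := by
    fun_prop
  have h1 : Tendsto (fun n => a₁ * Complex.exp (-(γ : ℂ) * lam n)) atTop (nhds z.1) := by
    have := (hcont.tendsto u₀).comp hgtend
    rw [hClim] at this
    exact this.congr fun n => (hfirst n).symm
  have h2 : Tendsto (fun n => a₂ * Complex.exp (lam n)) atTop (nhds z.2) :=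
    tendsto_const_nhds.congr fun n => (hsecond n).symm
  rw [hF]
  exact h1.prodMk_nhds h2
end
end

section
/- Let γ₁, γ₂ > 0 be irrational, r₁, r₂ > 1, and let ψ : D_{γ₁,r₁} → D_{γ₂,r₂} be an iso-conjugating mapping. Then for every z ∈ D_{γ₁,r₁} one has ψ({z·p_{γ₁}(λ) : λ ∈ ℂ}) = {ψ(z)·p_{γ₂}(λ) : λ ∈ ℂ}; in particular ψ maps the orbit z·p_{γ₁}(ℂ) bijectively onto the orbit ψ(z)·p_{γ₂}(ℂ). -/
open Complex Set

noncomputable section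

/-- The strip-type Reinhardt domain `D_{γ,r} = {z ∈ ℂ² : 1/r < |z₁||z₂|^γ < r}`. -/
def Dgr (γ r : ℝ) : Set (ℂ × ℂ) :=
  {z | 1 / r < ‖z.1‖ * ‖z.2‖ ^ γ ∧
       ‖z.1‖ * ‖z.2‖ ^ γ < r}

/-- The map `p_γ(λ) = (exp(-γλ), exp(λ))`. -/
def pgam (γ : ℝ) (lam : ℂ) : ℂ × ℂ :=
  (Complex.exp (-(γ : ℂ) * lam), Complex.exp lam)

/-- A holomorphic self-map of `D ⊆ ℂ²` (as a total function constrained only on `D`). -/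
def HoloEndo2 (D : Set (ℂ × ℂ)) (f : ℂ × ℂ → ℂ × ℂ) : Prop :=
  DifferentiableOn ℂ f D ∧ Set.MapsTo f D D

/-- `ψ : D₁ → D₂` (with inverse `ψinv`) is iso-conjugating: it is a bijection of `D₁`
onto `D₂` such that conjugation `f ↦ ψ ∘ f ∘ ψ⁻¹` is a bijection from the holomorphic
self-maps of `D₁` onto the holomorphic self-maps of `D₂` (its inverse being
conjugation by `ψ⁻¹`). -/
def IsoConjugating (D₁ D₂ : Set (ℂ × ℂ)) (ψ ψinv : ℂ × ℂ → ℂ × ℂ) : Prop :=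
  Set.MapsTo ψ D₁ D₂ ∧ Set.MapsTo ψinv D₂ D₁ ∧
  (∀ z ∈ D₁, ψinv (ψ z) = z) ∧ (∀ w ∈ D₂, ψ (ψinv w) = w) ∧
  (∀ f, HoloEndo2 D₁ f → HoloEndo2 D₂ (ψ ∘ f ∘ ψinv)) ∧
  (∀ g, HoloEndo2 D₂ g → HoloEndo2 D₁ (ψinv ∘ g ∘ ψ))

-- level is invariant
lemma level_mul_pgam (γ : ℝ) (z : ℂ × ℂ) (lam : ℂ) :
    ‖(z * pgam γ lam).1‖ * ‖(z * pgam γ lam).2‖ ^ γ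
      = ‖z.1‖ * ‖z.2‖ ^ γ := by
  have h1 : (z * pgam γ lam).1 = z.1 * Complex.exp (-(γ : ℂ) * lam) := rfl
  have h2 : (z * pgam γ lam).2 = z.2 * Complex.exp lam := rfl
  rw [h1, h2, norm_mul, norm_mul, Complex.norm_exp, Complex.norm_exp,
    Real.mul_rpow (norm_nonneg _) (Real.exp_pos _).le,
    Real.rpow_def_of_pos (Real.exp_pos _), Real.log_exp]
  have hre : (-(γ : ℂ) * lam).re = -(γ * lam.re) := by
    simp [Complex.mul_re]
  rw [hre]
  have : Real.exp (-(γ * lam.re)) * Real.exp (lam.re * γ) = 1 := by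
    rw [← Real.exp_add]; ring_nf; exact Real.exp_zero
  calc ‖z.1‖ * Real.exp (-(γ * lam.re)) *
        (‖z.2‖ ^ γ * Real.exp (lam.re * γ))
      = ‖z.1‖ * ‖z.2‖ ^ γ *
        (Real.exp (-(γ * lam.re)) * Real.exp (lam.re * γ)) := by ring
    _ = ‖z.1‖ * ‖z.2‖ ^ γ := by rw [this, mul_one]

lemma mem_Dgr_mul_pgam {γ r : ℝ} {z : ℂ × ℂ} (hz : z ∈ Dgr γ r) (lam : ℂ) :
    z * pgam γ lam ∈ Dgr γ r := by
  constructor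
  · rw [level_mul_pgam]; exact hz.1
  · rw [level_mul_pgam]; exact hz.2

lemma isOpen_Dgr {γ r : ℝ} (hγ : 0 < γ) : IsOpen (Dgr γ r) := by
  have hcont : Continuous fun z : ℂ × ℂ => ‖z.1‖ * ‖z.2‖ ^ γ :=
    (continuous_norm.comp continuous_fst).mul
      ((Real.continuous_rpow_const hγ.le).comp (continuous_norm.comp continuous_snd))
  have : Dgr γ r = (fun z : ℂ × ℂ => ‖z.1‖ * ‖z.2‖ ^ γ) ⁻¹' (Ioo (1/r) r) :=
    Set.ext fun z => by simp [Dgr, Set.mem_Ioo]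
  rw [this]
  exact isOpen_Ioo.preimage hcont

/-- Every entire function has an entire primitive. -/
lemma exists_primitive (h : ℂ → ℂ) (hh : Differentiable ℂ h) :
    ∃ H : ℂ → ℂ, ∀ z, HasDerivAt H (h z) z := by
  set a : ℕ → ℂ := fun n => (Nat.factorial n : ℂ)⁻¹ * iteratedDeriv n h 0 with ha
  have hsum : ∀ z : ℂ, HasSum (fun n => a n * z ^ n) (h z) := by
    intro z
    have H := Complex.hasSum_taylorSeries_of_entire hh 0 z
    have hfun : (fun n => a n * z ^ n)
        = fun n : ℕ => (Nat.factorial n : ℂ)⁻¹ • (z - 0) ^ n • iteratedDeriv n h 0 := by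
      funext n; simp only [ha, smul_eq_mul, sub_zero]; ring
    rw [hfun]; exact H
  set g : ℕ → ℂ → ℂ := fun n z => (((n : ℂ) + 1))⁻¹ * a n * z ^ (n + 1) with hg
  refine ⟨fun z => ∑' n, g n z, fun z₀ => ?_⟩
  set R : ℝ := ‖z₀‖ + 1 with hR
  have hRpos : 0 < R := by positivity
  -- bound on coefficients at radius R + 1
  have hs : Summable fun n => a n * ((R + 1 : ℝ) : ℂ) ^ n := (hsum _).summable
  have htend : Filter.Tendsto (fun n => ‖a n * ((R + 1 : ℝ) : ℂ) ^ n‖)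
      Filter.atTop (nhds 0) := by
    simpa using hs.tendsto_atTop_zero.norm
  obtain ⟨C, hC⟩ := htend.bddAbove_range
  have hCle : ∀ n : ℕ, ‖a n‖ * (R + 1) ^ n ≤ C := by
    intro n
    have := hC (Set.mem_range_self n)
    rwa [norm_mul, norm_pow, Complex.norm_real, Real.norm_eq_abs,
      abs_of_pos (by linarith)] at this
  have hCnonneg : 0 ≤ C := le_trans (by positivity) (hCle 0)
  set u : ℕ → ℝ := fun n => C * (R / (R + 1)) ^ n with hu
  have husum : Summable u := by
    apply Summable.mul_left
    apply summable_geometric_of_lt_one (by positivity)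
    rw [div_lt_one (by linarith)]; linarith
  have hderiv : ∀ n : ℕ, ∀ y : ℂ, HasDerivAt (g n) (a n * y ^ n) y := by
    intro n y
    have h1 : HasDerivAt (fun z : ℂ => z ^ (n + 1))
        (((n : ℂ) + 1) * y ^ n) y := by
      simpa using hasDerivAt_pow (n + 1) y
    have h2 := h1.const_mul ((((n : ℂ) + 1))⁻¹ * a n)
    refine h2.congr_deriv ?_
    have hne : ((n : ℂ) + 1) ≠ 0 := by
      have h0 : ((n + 1 : ℕ) : ℂ) ≠ 0 := Nat.cast_ne_zero.mpr (Nat.succ_ne_zero n)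
      push_cast at h0; exact h0
    linear_combination (a n * y ^ n) * inv_mul_cancel₀ hne
  have hball : ∀ n : ℕ, ∀ y ∈ Metric.ball (0 : ℂ) R, ‖a n * y ^ n‖ ≤ u n := by
    intro n y hy
    rw [Metric.mem_ball, dist_zero_right] at hy
    rw [norm_mul, norm_pow, hu]
    calc ‖a n‖ * ‖y‖ ^ n ≤ ‖a n‖ * R ^ n := by
          gcongr
      _ = (‖a n‖ * (R + 1) ^ n) * (R / (R + 1)) ^ n := by
          rw [div_pow, mul_assoc, mul_div_assoc']
          congr 1
          rw [mul_comm, mul_div_assoc, div_self (by positivity), mul_one]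
      _ ≤ C * (R / (R + 1)) ^ n :=
          mul_le_mul_of_nonneg_right (hCle n) (by positivity)
  have h0mem : (0 : ℂ) ∈ Metric.ball (0 : ℂ) R := by
    simpa using hRpos
  have hzmem : z₀ ∈ Metric.ball (0 : ℂ) R := by
    rw [Metric.mem_ball, dist_zero_right]; simp [hR]
  have hg0 : Summable fun n => g n 0 := by
    apply summable_of_ne_finset_zero (s := ∅)
    intro n _
    simp [hg]
  have := hasDerivAt_tsum_of_isPreconnected husum Metric.isOpen_ball
    (convex_ball (0:ℂ) R).isPreconnected
    (fun n y hy => hderiv n y) hball h0mem hg0 hzmem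
  rw [(hsum z₀).tsum_eq] at this
  exact this

/-- Every nonvanishing entire function has an entire logarithm. -/
lemma exists_entire_log (f : ℂ → ℂ) (hf : Differentiable ℂ f) (hne : ∀ z, f z ≠ 0) :
    ∃ b : ℂ → ℂ, Differentiable ℂ b ∧ ∀ z, Complex.exp (b z) = f z := by
  have hderiv : Differentiable ℂ (deriv f) := by
    intro z
    have h1 : AnalyticAt ℂ (fderiv ℂ f) z := (hf.analyticAt z).fderiv
    have h2 : DifferentiableAt ℂ (fun w => fderiv ℂ f w 1) z :=
      h1.differentiableAt.clm_apply (differentiableAt_const 1)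
    exact h2
  have hh : Differentiable ℂ (fun z => deriv f z / f z) := hderiv.div hf hne
  obtain ⟨H, hH⟩ := exists_primitive _ hh
  set b : ℂ → ℂ := fun z => H z - H 0 + Complex.log (f 0) with hb
  have hbdiff : Differentiable ℂ b := by
    have : Differentiable ℂ H := fun z => (hH z).differentiableAt
    fun_prop
  have hbderiv : ∀ z, HasDerivAt b (deriv f z / f z) z := by
    intro z
    exact ((hH z).sub_const (H 0)).add_const (Complex.log (f 0))
  set q : ℂ → ℂ := fun z => f z * Complex.exp (-(b z)) with hq
  have hqderiv : ∀ z, HasDerivAt q 0 z := by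
    intro z
    have h1 : HasDerivAt f (deriv f z) z := (hf z).hasDerivAt
    have h2 : HasDerivAt (fun w => Complex.exp (-(b w)))
        (Complex.exp (-(b z)) * (-(deriv f z / f z))) z := ((hbderiv z).neg).cexp
    have h3 := h1.mul h2
    refine h3.congr_deriv ?_
    have hfz := hne z
    linear_combination (-(deriv f z * Complex.exp (-(b z)))) * mul_inv_cancel₀ hfz
  have hqconst : ∀ z, q z = q 0 := by
    have hqdiff : Differentiable ℂ q := fun z => (hqderiv z).differentiableAt
    intro z
    exact is_const_of_deriv_eq_zero hqdiff (fun x => (hqderiv x).deriv) z 0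
  refine ⟨b, hbdiff, fun z => ?_⟩
  have h0 : q 0 = 1 := by
    have hb0 : b 0 = Complex.log (f 0) := by simp [hb]
    rw [hq]
    simp only [hb0, Complex.exp_neg, Complex.exp_log (hne 0)]
    exact div_self (hne 0)
  have := hqconst z
  rw [h0, hq] at this
  simp only [Complex.exp_neg] at this
  have hexp : Complex.exp (b z) ≠ 0 := Complex.exp_ne_zero _
  field_simp at this
  exact this.symm

/-- An entire curve in `Dgr γ r` lies in a single orbit of `pgam γ`. -/
lemma curve_in_orbit {γ r : ℝ} (hγ : 0 < γ) (hr : 1 < r) (E : ℂ → ℂ × ℂ)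
    (hE : Differentiable ℂ E) (hmem : ∀ μ, E μ ∈ Dgr γ r) (μ : ℂ) :
    ∃ lam : ℂ, E μ = E 0 * pgam γ lam := by
  have hrinv : 0 < 1 / r := by positivity
  have hne2 : ∀ ν, (E ν).2 ≠ 0 := by
    intro ν h0
    have := (hmem ν).1
    rw [h0] at this
    simp [Real.zero_rpow hγ.ne'] at this
    linarith
  have hne1 : ∀ ν, (E ν).1 ≠ 0 := by
    intro ν h0
    have := (hmem ν).1
    rw [h0] at this
    simp at this
    linarith
  obtain ⟨b, hbdiff, hbexp⟩ := exists_entire_log (fun ν => (E ν).2) hE.snd hne2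
  set G : ℂ → ℂ := fun ν => (E ν).1 * Complex.exp ((γ : ℂ) * b ν) with hG
  have hGdiff : Differentiable ℂ G := hE.fst.mul ((hbdiff.const_mul _).cexp)
  have habs : ∀ ν, ‖Complex.exp ((γ : ℂ) * b ν)‖ = ‖(E ν).2‖ ^ γ := by
    intro ν
    rw [Complex.norm_exp]
    have hre : ((γ : ℂ) * b ν).re = γ * (b ν).re := by simp [Complex.mul_re]
    rw [hre]
    have h2 : ‖(E ν).2‖ = Real.exp ((b ν).re) := by
      rw [← hbexp ν, Complex.norm_exp]
    rw [h2, Real.rpow_def_of_pos (Real.exp_pos _), Real.log_exp, mul_comm]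
  have hbound : ∀ ν, ‖G ν‖ ≤ r := by
    intro ν
    have : ‖G ν‖ = ‖(E ν).1‖ * ‖(E ν).2‖ ^ γ := by
      rw [hG]
      simp only [norm_mul, habs ν]
    rw [this]
    exact (hmem ν).2.le
  have hbd : Bornology.IsBounded (Set.range G) := by
    rw [isBounded_iff_forall_norm_le]
    exact ⟨r, by rintro _ ⟨ν, rfl⟩; exact hbound ν⟩
  have hGconst : G μ = G 0 := hGdiff.apply_eq_apply_of_bounded hbd μ 0
  refine ⟨b μ - b 0, ?_⟩
  have hsnd : (E μ).2 = (E 0).2 * Complex.exp (b μ - b 0) := by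
    rw [← hbexp μ, ← hbexp 0, ← Complex.exp_add]
    ring_nf
  have hfst : (E μ).1 = (E 0).1 * Complex.exp (-(γ : ℂ) * (b μ - b 0)) := by
    have key : (E μ).1 * Complex.exp ((γ : ℂ) * b μ)
        = (E 0).1 * Complex.exp ((γ : ℂ) * b 0) := hGconst
    have harg : -(γ : ℂ) * (b μ - b 0) = (γ : ℂ) * b 0 - (γ : ℂ) * b μ := by ring
    rw [harg, Complex.exp_sub]
    field_simp
    linear_combination key
  exact Prod.ext hfst hsnd

lemma mul_pgam_zero (γ : ℝ) (z : ℂ × ℂ) : z * pgam γ 0 = z := by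
  have : pgam γ 0 = (1, 1) := by simp [pgam]
  rw [this]
  exact Prod.ext (mul_one _) (mul_one _)

lemma one_mem_Dgr {γ r : ℝ} (hr : 1 < r) : ((1 : ℂ), (1 : ℂ)) ∈ Dgr γ r := by
  have h1 : ‖((1 : ℂ), (1 : ℂ)).1‖ * ‖((1 : ℂ), (1 : ℂ)).2‖ ^ γ = 1 := by
    simp [Real.one_rpow]
  constructor
  · rw [h1]; exact (div_lt_one (by linarith)).mpr hr
  · rw [h1]; exact hr

lemma pgam_diff {X : Type*} [NormedAddCommGroup X] [NormedSpace ℂ X]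
    (γ : ℝ) (z : ℂ × ℂ) {φ : X → ℂ} (hφ : Differentiable ℂ φ) :
    Differentiable ℂ (fun v => z * pgam γ (φ v)) := by
  have : (fun v => z * pgam γ (φ v))
      = fun v => (z.1 * Complex.exp (-(γ : ℂ) * φ v), z.2 * Complex.exp (φ v)) := rfl
  rw [this]
  exact ((differentiable_const z.1).mul ((hφ.const_mul _).cexp)).prodMk
    ((differentiable_const z.2).mul hφ.cexp)

lemma pgam_curve_diff (γ : ℝ) (a : ℂ × ℂ) :
    Differentiable ℂ (fun μ : ℂ => a * pgam γ μ) :=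
  pgam_diff γ a differentiable_id

/-- The key lemma: an iso-conjugating mapping sends `z ⬝ p_{γ₁}(λ₀)` into the
`p_{γ₂}`-orbit of `ψ z`. -/
lemma key_lemma {γ₁ γ₂ r₁ r₂ : ℝ}
    (hγ₁pos : 0 < γ₁) (hγ₂pos : 0 < γ₂) (hr₁ : 1 < r₁) (hr₂ : 1 < r₂)
    (ψ ψinv : ℂ × ℂ → ℂ × ℂ)
    (hψ : IsoConjugating (Dgr γ₁ r₁) (Dgr γ₂ r₂) ψ ψinv)
    (z : ℂ × ℂ) (hz : z ∈ Dgr γ₁ r₁) (lam0 : ℂ) :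
    ∃ lam : ℂ, ψ (z * pgam γ₁ lam0) = ψ z * pgam γ₂ lam := by
  obtain ⟨hm1, hm2, hinv1, hinv2, hconj1, hconj2⟩ := hψ
  set a : ℂ × ℂ := (1, 1) with haa
  have ha : a ∈ Dgr γ₂ r₂ := one_mem_Dgr hr₂
  set a' : ℂ × ℂ := a * pgam γ₂ 1 with ha'
  have ha'mem : a' ∈ Dgr γ₂ r₂ := mem_Dgr_mul_pgam ha 1
  have hane : a ≠ a' := by
    intro h
    have h2 : a.2 = a'.2 := by rw [h]
    have : (1 : ℂ) = Complex.exp 1 := by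
      simpa [haa, ha', pgam] using h2
    have habs := congrArg (‖·‖) this
    rw [Complex.norm_exp] at habs
    simp at habs
    have := Real.exp_one_gt_d9
    rw [← habs] at this
    norm_num at this
  set w : ℂ × ℂ := ψinv a with hw
  set w' : ℂ × ℂ := ψinv a' with hw'
  have hwD : w ∈ Dgr γ₁ r₁ := hm2 ha
  have hw'D : w' ∈ Dgr γ₁ r₁ := hm2 ha'mem
  have hwne : w ≠ w' := by
    intro h
    apply hane
    rw [← hinv2 a ha, ← hinv2 a' ha'mem, ← hw, ← hw', h]
  -- affine φ with φ w = 0, φ w' = lam0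
  obtain ⟨φ, hφdiff, hφw, hφw'⟩ :
      ∃ φ : ℂ × ℂ → ℂ, Differentiable ℂ φ ∧ φ w = 0 ∧ φ w' = lam0 := by
    by_cases hc : w.1 = w'.1
    · have hc2 : w.2 ≠ w'.2 := by
        intro h2; exact hwne (Prod.ext hc h2)
      refine ⟨fun v => lam0 / (w'.2 - w.2) * (v.2 - w.2), ?_, by simp, ?_⟩
      · exact (differentiable_const _).mul (differentiable_snd.sub (differentiable_const _))
      · field_simp [sub_ne_zero.mpr (Ne.symm hc2)]
    · refine ⟨fun v => lam0 / (w'.1 - w.1) * (v.1 - w.1), ?_, by simp, ?_⟩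
      · exact (differentiable_const _).mul (differentiable_fst.sub (differentiable_const _))
      · field_simp [sub_ne_zero.mpr (Ne.symm hc)]
  set f : ℂ × ℂ → ℂ × ℂ := fun v => z * pgam γ₁ (φ v) with hf
  have hfendo : HoloEndo2 (Dgr γ₁ r₁) f :=
    ⟨(pgam_diff γ₁ z hφdiff).differentiableOn,
     fun v _ => mem_Dgr_mul_pgam hz (φ v)⟩
  have hgendo := hconj1 f hfendo
  set g : ℂ × ℂ → ℂ × ℂ := ψ ∘ f ∘ ψinv with hg
  set E : ℂ → ℂ × ℂ := fun μ => g (a * pgam γ₂ μ) with hE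
  have hEmem : ∀ μ, E μ ∈ Dgr γ₂ r₂ := fun μ => hgendo.2 (mem_Dgr_mul_pgam ha μ)
  have hEdiff : Differentiable ℂ E := by
    intro μ
    have hcur : DifferentiableAt ℂ (fun μ : ℂ => a * pgam γ₂ μ) μ := pgam_curve_diff γ₂ a μ
    have hgat : DifferentiableAt ℂ g (a * pgam γ₂ μ) :=
      hgendo.1.differentiableAt
        ((isOpen_Dgr hγ₂pos).mem_nhds (mem_Dgr_mul_pgam ha μ))
    exact DifferentiableAt.comp (g := g) (f := fun μ : ℂ => a * pgam γ₂ μ) μ hgat hcur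
  obtain ⟨lam, hlam⟩ := curve_in_orbit hγ₂pos hr₂ E hEdiff hEmem 1
  have hE0 : E 0 = ψ z := by
    show g (a * pgam γ₂ 0) = ψ z
    rw [mul_pgam_zero, hg]
    show ψ (f (ψinv a)) = ψ z
    rw [← hw]
    have : f w = z := by rw [hf]; simp only [hφw]; exact mul_pgam_zero γ₁ z
    rw [this]
  have hE1 : E 1 = ψ (z * pgam γ₁ lam0) := by
    show g (a * pgam γ₂ 1) = ψ (z * pgam γ₁ lam0)
    rw [← ha', hg]
    show ψ (f (ψinv a')) = ψ (z * pgam γ₁ lam0)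
    rw [← hw']
    have : f w' = z * pgam γ₁ lam0 := by rw [hf]; simp only [hφw']
    rw [this]
  exact ⟨lam, by rw [← hE1, hlam, hE0]⟩

/-- an iso-conjugating mapping between strip-type domains maps each
orbit `z · p_{γ₁}(ℂ)` bijectively onto the orbit `ψ(z) · p_{γ₂}(ℂ)`. -/
theorem stmt15 (γ₁ γ₂ r₁ r₂ : ℝ)
    (hγ₁pos : 0 < γ₁) (hγ₁ : Irrational γ₁) (hγ₂pos : 0 < γ₂) (hγ₂ : Irrational γ₂)
    (hr₁ : 1 < r₁) (hr₂ : 1 < r₂)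
    (ψ ψinv : ℂ × ℂ → ℂ × ℂ)
    (hψ : IsoConjugating (Dgr γ₁ r₁) (Dgr γ₂ r₂) ψ ψinv) :
    ∀ z ∈ Dgr γ₁ r₁,
      ψ '' {w | ∃ lam : ℂ, w = z * pgam γ₁ lam} =
        {w | ∃ lam : ℂ, w = ψ z * pgam γ₂ lam} ∧
      Set.BijOn ψ {w | ∃ lam : ℂ, w = z * pgam γ₁ lam}
        {w | ∃ lam : ℂ, w = ψ z * pgam γ₂ lam} := by
  intro z hz
  obtain ⟨hm1, hm2, hinv1, hinv2, hconj1, hconj2⟩ := hψ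
  have hψ' : IsoConjugating (Dgr γ₁ r₁) (Dgr γ₂ r₂) ψ ψinv :=
    ⟨hm1, hm2, hinv1, hinv2, hconj1, hconj2⟩
  have hψsym : IsoConjugating (Dgr γ₂ r₂) (Dgr γ₁ r₁) ψinv ψ :=
    ⟨hm2, hm1, hinv2, hinv1, hconj2, hconj1⟩
  have hψz : ψ z ∈ Dgr γ₂ r₂ := hm1 hz
  have heq : ψ '' {w | ∃ lam : ℂ, w = z * pgam γ₁ lam} =
      {w | ∃ lam : ℂ, w = ψ z * pgam γ₂ lam} := by
    apply Set.Subset.antisymm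
    · rintro x ⟨y, ⟨lam0, rfl⟩, rfl⟩
      obtain ⟨lam, hlam⟩ := key_lemma hγ₁pos hγ₂pos hr₁ hr₂ ψ ψinv hψ' z hz lam0
      exact ⟨lam, hlam⟩
    · rintro x ⟨lam0, rfl⟩
      obtain ⟨lam, hlam⟩ :=
        key_lemma hγ₂pos hγ₁pos hr₂ hr₁ ψinv ψ hψsym (ψ z) hψz lam0
      rw [hinv1 z hz] at hlam
      have hxD : ψ z * pgam γ₂ lam0 ∈ Dgr γ₂ r₂ := mem_Dgr_mul_pgam hψz lam0
      exact ⟨ψinv (ψ z * pgam γ₂ lam0), ⟨lam, hlam⟩,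
        hinv2 _ hxD⟩
  refine ⟨heq, ?_, ?_, ?_⟩
  · intro x hx
    rw [← heq]
    exact Set.mem_image_of_mem ψ hx
  · intro x hx y hy hxy
    obtain ⟨lamx, rfl⟩ := hx
    obtain ⟨lamy, rfl⟩ := hy
    have h1 : z * pgam γ₁ lamx ∈ Dgr γ₁ r₁ := mem_Dgr_mul_pgam hz lamx
    have h2 : z * pgam γ₁ lamy ∈ Dgr γ₁ r₁ := mem_Dgr_mul_pgam hz lamy
    rw [← hinv1 _ h1, ← hinv1 _ h2, hxy]
  · rw [Set.SurjOn, heq]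
end
end

section
/- Let γ > 0 be irrational and let D_γ := {z ∈ ℂ² : |z₁||z₂|^γ < 1}. Then every bounded holomorphic function f : D_γ → ℂ is constant. -/
open Complex Set

noncomputable section

open Bornology Metric Filter Topology Real

lemma dg_dense_aux {γ : ℝ} (hγ : Irrational γ) (x : ℝ) {ε : ℝ} (hε : 0 < ε) :
    ∃ m k : ℤ, |(m : ℝ) + γ * k - x| < ε := by
  set S : AddSubgroup ℝ :=
    { carrier := {y | ∃ m k : ℤ, (m : ℝ) + γ * k = y}
      zero_mem' := ⟨0, 0, by simp⟩
      add_mem' := by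
        rintro y z ⟨m, k, rfl⟩ ⟨m', k', rfl⟩
        exact ⟨m + m', k + k', by push_cast; ring⟩
      neg_mem' := by
        rintro y ⟨m, k, rfl⟩
        exact ⟨-m, -k, by push_cast; ring⟩ } with hS
  have hd : Dense (S : Set ℝ) := by
    rcases S.dense_or_cyclic with h | ⟨a, ha⟩
    · exact h
    · exfalso
      have h1 : (1 : ℝ) ∈ S := ⟨1, 0, by simp⟩
      have h2 : γ ∈ S := ⟨0, 1, by simp⟩
      rw [ha, AddSubgroup.mem_closure_singleton] at h1 h2
      obtain ⟨n, hn⟩ := h1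
      obtain ⟨m, hm⟩ := h2
      rw [zsmul_eq_mul] at hn hm
      have hn0 : (n : ℝ) ≠ 0 := by
        intro h
        rw [h, zero_mul] at hn
        exact one_ne_zero hn.symm
      have key : γ * n = m := by linear_combination (m : ℝ) * hn - (n : ℝ) * hm
      refine hγ ⟨(m : ℚ) / (n : ℚ), ?_⟩
      push_cast
      field_simp
      linarith [key]
  have hx := hd x
  rw [Metric.mem_closure_iff] at hx
  obtain ⟨y, ⟨m, k, rfl⟩, hy⟩ := hx ε hε
  exact ⟨m, k, by rw [abs_sub_comm]; simpa [Real.dist_eq] using hy⟩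

lemma isOpen_Dg {γ : ℝ} (hγpos : 0 < γ) : IsOpen (Dg γ) := by
  have hc : Continuous fun z : ℂ × ℂ => ‖z.1‖ * ‖z.2‖ ^ γ := by
    apply Continuous.mul
    · exact continuous_norm.comp continuous_fst
    · have h1 : Continuous fun x : ℝ => x ^ γ := by
        rw [continuous_iff_continuousAt]
        intro x
        exact Real.continuousAt_rpow_const x γ (Or.inr hγpos.le)
      exact h1.comp (continuous_norm.comp continuous_snd)
  exact isOpen_Iio.preimage hc

/-- every bounded holomorphic function on `D_γ` is constant. -/
theorem stmt19 (γ : ℝ) (hγpos : 0 < γ) (hγ : Irrational γ)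
    (f : ℂ × ℂ → ℂ)
    (hf : DifferentiableOn ℂ f (Dg γ))
    (hb : Bornology.IsBounded (f '' Dg γ)) :
    ∃ c : ℂ, ∀ z ∈ Dg γ, f z = c := by
  have hγ0 : γ ≠ 0 := hγpos.ne'
  have hop : IsOpen (Dg γ) := isOpen_Dg hγpos
  have hcont : ContinuousOn f (Dg γ) := hf.continuousOn
  -- Liouville helper
  have liou : ∀ e : ℂ → ℂ × ℂ, Differentiable ℂ e → (∀ w, e w ∈ Dg γ) →
      ∀ z w : ℂ, f (e z) = f (e w) := by
    intro e he hr z w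
    have hdiff : Differentiable ℂ (f ∘ e) := fun x =>
      (hf.differentiableAt (hop.mem_nhds (hr x))).comp x (he x)
    have hbd : IsBounded (Set.range (f ∘ e)) := by
      apply hb.subset
      rintro _ ⟨x, rfl⟩
      exact ⟨e x, hr x, rfl⟩
    exact hdiff.apply_eq_apply_of_bounded hbd z w
  have haxis1 : ∀ z : ℂ, f (z, 0) = f (0, 0) := by
    intro z
    exact liou (fun w => (w, 0)) (differentiable_id.prodMk (differentiable_const _))
      (fun w => by simp [Dg, Real.zero_rpow hγ0]) z 0
  have haxis2 : ∀ z : ℂ, f (0, z) = f (0, 0) := by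
    intro z
    exact liou (fun w => (0, w)) ((differentiable_const _).prodMk differentiable_id)
      (fun w => by simp [Dg]) z 0
  have hexp : ∀ t : ℝ, Real.exp t ^ γ = Real.exp (t * γ) := by
    intro t
    rw [Real.rpow_def_of_pos (Real.exp_pos t), Real.log_exp]
  -- step B : invariance along the entire orbits
  have hB : ∀ a b : ℂ, (a, b) ∈ Dg γ → ∀ w : ℂ,
      f (a * Complex.exp w, b * Complex.exp (((-γ⁻¹ : ℝ) : ℂ) * w)) = f (a, b) := by
    intro a b hab w
    have hmem : ∀ w : ℂ,
        (a * Complex.exp w, b * Complex.exp (((-γ⁻¹ : ℝ) : ℂ) * w)) ∈ Dg γ := by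
      intro w
      have h1 : ‖a * Complex.exp w‖ = ‖a‖ * Real.exp w.re := by
        simp [map_mul, Complex.norm_exp]
      have h2 : ‖b * Complex.exp (((-γ⁻¹ : ℝ) : ℂ) * w)‖
          = ‖b‖ * Real.exp (-γ⁻¹ * w.re) := by
        simp [map_mul, Complex.norm_exp]
      show ‖_‖ * ‖_‖ ^ γ < 1
      rw [h1, h2, Real.mul_rpow (norm_nonneg b) (Real.exp_pos _).le, hexp]
      have e3 : -γ⁻¹ * w.re * γ = -w.re := by field_simp
      rw [e3]
      have e4 : ‖a‖ * Real.exp w.re * (‖b‖ ^ γ * Real.exp (-w.re))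
          = ‖a‖ * ‖b‖ ^ γ * (Real.exp w.re * Real.exp (-w.re)) := by ring
      rw [e4, ← Real.exp_add, add_neg_cancel, Real.exp_zero, mul_one]
      exact hab
    have hdiffe : Differentiable ℂ fun w : ℂ =>
        (a * Complex.exp w, b * Complex.exp (((-γ⁻¹ : ℝ) : ℂ) * w)) := by
      apply Differentiable.prodMk
      · exact Complex.differentiable_exp.const_mul a
      · exact (Complex.differentiable_exp.comp (differentiable_id.const_mul _)).const_mul b
    have := liou _ hdiffe hmem w 0
    simpa using this
  -- step C : rotation invariance in the first variable
  have hC : ∀ a b : ℂ, (a, b) ∈ Dg γ → ∀ φ : ℝ,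
      f (a * Complex.exp ((φ : ℂ) * Complex.I), b) = f (a, b) := by
    intro a b hab φ
    have hsel : ∀ n : ℕ, ∃ m' k' : ℤ,
        |(m' : ℝ) + γ * k' - (-(φ / (2 * π)))| < 1 / (n + 1) :=
      fun n => dg_dense_aux hγ _ (by positivity)
    choose m k hmk using hsel
    set u : ℕ → ℝ := fun n => -(2 * π) * ((m n : ℝ) + γ * (k n)) with hu
    have hulim : Tendsto u atTop (𝓝 φ) := by
      rw [tendsto_iff_dist_tendsto_zero]
      apply squeeze_zero (g := fun n : ℕ => (2 * π) * (1 / (n + 1))) (fun n => dist_nonneg)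
      · intro n
        rw [Real.dist_eq]
        have habs : u n - φ = -((2 * π) * ((m n : ℝ) + γ * k n - (-(φ / (2 * π))))) := by
          rw [hu]
          field_simp
          ring
        rw [habs, abs_neg, abs_mul, abs_of_pos (by positivity : (0:ℝ) < 2 * π)]
        exact mul_le_mul_of_nonneg_left (hmk n).le (by positivity)
      · simpa using (tendsto_one_div_add_atTop_nhds_zero_nat).const_mul (2 * π)
    have hval : ∀ n : ℕ, f (a * Complex.exp ((u n : ℂ) * Complex.I), b) = f (a, b) := by
      intro n
      have hγc : (γ : ℂ) ≠ 0 := Complex.ofReal_ne_zero.mpr hγ0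
      have h2 : Complex.exp (((-γ⁻¹ : ℝ) : ℂ) *
          (((-(2 * π) * (γ * k n) : ℝ) : ℂ) * Complex.I)) = 1 := by
        have harg : ((-γ⁻¹ : ℝ) : ℂ) * (((-(2 * π) * (γ * k n) : ℝ) : ℂ) * Complex.I)
            = (k n : ℂ) * (2 * π * Complex.I) := by
          push_cast
          field_simp
        rw [harg, Complex.exp_int_mul_two_pi_mul_I]
      have h1 : Complex.exp ((u n : ℂ) * Complex.I)
          = Complex.exp (((-(2 * π) * (γ * k n) : ℝ) : ℂ) * Complex.I) := by
        have harg : ((u n : ℝ) : ℂ) * Complex.I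
            = ((-(2 * π) * (γ * k n) : ℝ) : ℂ) * Complex.I + (-(m n) : ℤ) * (2 * π * Complex.I) := by
          rw [hu]
          push_cast
          ring
        rw [harg, Complex.exp_add, Complex.exp_int_mul_two_pi_mul_I, mul_one]
      have hthis := hB a b hab (((-(2 * π) * (γ * k n) : ℝ) : ℂ) * Complex.I)
      rw [h2, mul_one] at hthis
      rw [h1]
      exact hthis
    have hmemφ : (a * Complex.exp ((φ : ℂ) * Complex.I), b) ∈ Dg γ := by
      show ‖_‖ * ‖b‖ ^ γ < 1
      rw [norm_mul]
      simpa [Complex.norm_exp] using (show ‖a‖ * ‖b‖ ^ γ < 1 from hab)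
    have hplim : Tendsto (fun n => (a * Complex.exp ((u n : ℂ) * Complex.I), b)) atTop
        (𝓝 (a * Complex.exp ((φ : ℂ) * Complex.I), b)) := by
      apply Filter.Tendsto.prodMk_nhds ?_ tendsto_const_nhds
      have hc2 : Continuous fun s : ℝ => a * Complex.exp ((s : ℂ) * Complex.I) := by
        continuity
      exact (hc2.tendsto φ).comp hulim
    have hfc : ContinuousAt f (a * Complex.exp ((φ : ℂ) * Complex.I), b) :=
      hcont.continuousAt (hop.mem_nhds hmemφ)
    have hlim2 : Tendsto (fun n => f (a * Complex.exp ((u n : ℂ) * Complex.I), b)) atTop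
        (𝓝 (f (a * Complex.exp ((φ : ℂ) * Complex.I), b))) := hfc.tendsto.comp hplim
    exact tendsto_nhds_unique (hlim2.congr hval) tendsto_const_nhds
  -- conclusion
  refine ⟨f (0, 0), ?_⟩
  rintro ⟨a, b⟩ hz
  by_cases hb0 : b = 0
  · subst hb0; exact haxis1 a
  by_cases ha0 : a = 0
  · subst ha0; exact haxis2 b
  set r : ℝ := ‖a‖ with hr
  set R : ℝ := ‖b‖ ^ (-γ) with hR
  have hbpos : 0 < ‖b‖ := norm_pos_iff.mpr hb0
  have hbγ : 0 < ‖b‖ ^ γ := Real.rpow_pos_of_pos hbpos γ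
  have hRγ : R * ‖b‖ ^ γ = 1 := by
    rw [hR, ← Real.rpow_add hbpos, neg_add_cancel, Real.rpow_zero]
  have hz' : r * ‖b‖ ^ γ < 1 := hz
  have hrR : r < R := by nlinarith
  have hrpos : 0 < r := norm_pos_iff.mpr ha0
  have hmemU : ∀ z : ℂ, z ∈ ball (0 : ℂ) R → (z, b) ∈ Dg γ := by
    intro z hzU
    rw [mem_ball_zero_iff] at hzU
    show ‖z‖ * ‖b‖ ^ γ < 1
    rw [← hRγ]
    exact mul_lt_mul_of_pos_right hzU hbγ
  have hg : AnalyticOnNhd ℂ (fun z : ℂ => f (z, b)) (ball (0 : ℂ) R) := by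
    apply DifferentiableOn.analyticOnNhd ?_ isOpen_ball
    intro z hzU
    apply DifferentiableAt.differentiableWithinAt
    exact (hf.differentiableAt (hop.mem_nhds (hmemU z hzU))).comp z
      (differentiableAt_id.prodMk (differentiableAt_const b))
  have hr0mem : (r : ℂ) ∈ ball (0 : ℂ) R := by
    rw [mem_ball_zero_iff, Complex.norm_real, Real.norm_eq_abs, abs_of_pos hrpos]
    exact hrR
  have hrbmem : ((r : ℂ), b) ∈ Dg γ := hmemU _ hr0mem
  have hrne : (r : ℂ) ≠ 0 := Complex.ofReal_ne_zero.mpr hrpos.ne'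
  have hfreq : ∃ᶠ z in 𝓝[≠] (r : ℂ), f (z, b) = f ((r : ℂ), b) := by
    have hseq : Tendsto
        (fun n : ℕ => (r : ℂ) * Complex.exp (((1 / (n + 1) : ℝ) : ℂ) * Complex.I)) atTop
        (𝓝[≠] (r : ℂ)) := by
      apply tendsto_nhdsWithin_of_tendsto_nhds_of_eventually_within
      · have hc2 : Continuous fun s : ℝ => (r : ℂ) * Complex.exp ((s : ℂ) * Complex.I) := by
          continuity
        have h0 : Tendsto (fun n : ℕ => (1 / (n + 1) : ℝ)) atTop (𝓝 0) :=
          tendsto_one_div_add_atTop_nhds_zero_nat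
        have := (hc2.tendsto 0).comp h0
        simp only [Function.comp_def] at this
        simpa using this
      · apply Filter.Eventually.of_forall
        intro n
        have hne : Complex.exp (((1 / (n + 1) : ℝ) : ℂ) * Complex.I) ≠ 1 := by
          rw [Ne, Complex.exp_eq_one_iff]
          rintro ⟨j, hj⟩
          have hj2 : ((1 / (n + 1 : ℝ) : ℝ) : ℂ) * I = (((j : ℝ) * (2 * π) : ℝ) : ℂ) * I := by
            rw [hj]; push_cast; ring
          have hj' : (1 / (n + 1 : ℝ)) = (j : ℝ) * (2 * π) :=
            Complex.ofReal_inj.mp (mul_right_cancel₀ Complex.I_ne_zero hj2)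
          have hpos : (0 : ℝ) < 1 / (n + 1) := by positivity
          have hle : (1 / (n + 1) : ℝ) ≤ 1 := by
            rw [div_le_one (by positivity)]
            linarith [Nat.cast_nonneg (α := ℝ) n]
          rcases le_or_gt (j : ℝ) 0 with hj0 | hj0
          · nlinarith [Real.pi_pos, hj', hpos, hj0]
          · have hj1 : (1 : ℝ) ≤ (j : ℝ) := by
              exact_mod_cast Int.cast_pos.mp hj0
            nlinarith [Real.pi_gt_three, hj', hle, hj1]
        simp only [Set.mem_compl_iff, Set.mem_singleton_iff]
        intro hcontra
        exact hne (mul_left_cancel₀ hrne (hcontra.trans (mul_one (r : ℂ)).symm))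
    apply hseq.frequently
    apply Filter.Frequently.of_forall
    intro n
    exact hC (r : ℂ) b hrbmem (1 / (n + 1))
  have heq := hg.eqOn_of_preconnected_of_frequently_eq analyticOnNhd_const
    (convex_ball (0 : ℂ) R).isPreconnected hr0mem hfreq
  have hamem : a ∈ ball (0 : ℂ) R := by
    rw [mem_ball_zero_iff, ← hr]
    exact hrR
  have h0mem : (0 : ℂ) ∈ ball (0 : ℂ) R := by
    rw [mem_ball_zero_iff]
    simpa using hrpos.trans hrR
  calc f (a, b) = f ((r : ℂ), b) := heq hamem
    _ = f (0, b) := (heq h0mem).symm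
    _ = f (0, 0) := haxis2 b
end
end
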